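/- arXiv:1408.2247 — 4 statements merged into one kernel-verified Lean document; each statement's English description precedes it below -/
import Mathlib

section
/- Let n be even and let p₁, …, pₙ be points all lying on one line ℓ in E, none lying on the circle C. If there exists a point x ∈ C with x ∉ ℓ such that I_{pₙ}(⋯(I_{p₁} x)⋯) = x, then the composition I_{pₙ} ∘ ⋯ ∘ I_{p₁} is the identity map of C. (For collinear points and even n, one non-trivial solution of Castillon's problem implies that every starting point gives a solution.) -/
open Metric

/-- The Euclidean plane. -/
abbrev E2 : Type := EuclideanSpace ℝ (Fin 2)

/-- `I` restricts on the circle `sphere o ρ` to the chord map through `p`: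
for every `x` on the circle, `I x` is the point of the circle on the line through `x` and `p`
such that every point of the circle on that line equals `x` or `I x`. -/
def ChordMap (o : E2) (ρ : ℝ) (p : E2) (I : E2 → E2) : Prop :=
  ∀ x ∈ sphere o ρ, I x ∈ sphere o ρ ∧
    I x ∈ affineSpan ℝ ({x, p} : Set E2) ∧
    ∀ z ∈ sphere o ρ, z ∈ affineSpan ℝ ({x, p} : Set E2) → z = x ∨ z = I x

/-- Apply a list of maps in order: `chain [f₁, …, fₙ] x = fₙ (⋯ (f₁ x) ⋯)`,
i.e. the composition `fₙ ∘ ⋯ ∘ f₁` applied to `x`. -/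
def chain (I : List (E2 → E2)) (x : E2) : E2 :=
  I.foldl (fun y f => f y) x

namespace Porism

noncomputable def ptE (a b : ℝ) : E2 := (WithLp.equiv 2 (Fin 2 → ℝ)).symm ![a, b]

@[simp] lemma ptE_zero (a b : ℝ) : ptE a b 0 = a := rfl
@[simp] lemma ptE_one (a b : ℝ) : ptE a b 1 = b := rfl

lemma E2_ext {x y : E2} (h0 : x 0 = y 0) (h1 : x 1 = y 1) : x = y := by
  ext i
  fin_cases i
  · exact h0
  · exact h1

lemma mem_sphere_iff {o : E2} {ρ : ℝ} (hρ : 0 < ρ) {z : E2} :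
    z ∈ sphere o ρ ↔ (z 0 - o 0) ^ 2 + (z 1 - o 1) ^ 2 = ρ ^ 2 := by
  rw [mem_sphere, EuclideanSpace.dist_eq, Fin.sum_univ_two]
  simp only [Real.dist_eq, sq_abs]
  constructor
  · intro h
    rw [← h, Real.sq_sqrt] ; positivity
  · intro h
    rw [h]
    exact Real.sqrt_sq hρ.le

lemma smul_sub_apply (r : ℝ) (B A : E2) (i : Fin 2) :
    (r • (B - A)) i = r * (B i - A i) := by
  simp

lemma mem_line_iff {A B z : E2} (hAB : A ≠ B) :
    z ∈ affineSpan ℝ ({A, B} : Set E2) ↔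
      (z 0 - A 0) * (B 1 - A 1) = (z 1 - A 1) * (B 0 - A 0) := by
  constructor
  · intro hz
    have h2 : (z - A) +ᵥ A ∈ line[ℝ, A, B] := by
      simpa using hz
    obtain ⟨r, hr⟩ := vadd_left_mem_affineSpan_pair.mp h2
    have hr0 : r * (B 0 - A 0) = z 0 - A 0 := by
      have := congrFun (congrArg (fun w : E2 => (w : Fin 2 → ℝ)) hr) 0
      simpa using this
    have hr1 : r * (B 1 - A 1) = z 1 - A 1 := by
      have := congrFun (congrArg (fun w : E2 => (w : Fin 2 → ℝ)) hr) 1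
      simpa using this
    rw [← hr0, ← hr1]; ring
  · intro hdet
    have hcoord : B 0 - A 0 ≠ 0 ∨ B 1 - A 1 ≠ 0 := by
      by_contra hc
      push_neg at hc
      exact hAB (E2_ext (by linarith [hc.1]) (by linarith [hc.2]))
    have key : ∃ r : ℝ, r * (B 0 - A 0) = z 0 - A 0 ∧ r * (B 1 - A 1) = z 1 - A 1 := by
      rcases hcoord with h | h
      · refine ⟨(z 0 - A 0) / (B 0 - A 0), by field_simp, ?_⟩
        field_simp
        linarith [hdet]
      · refine ⟨(z 1 - A 1) / (B 1 - A 1), ?_, by field_simp⟩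
        field_simp
        linarith [hdet]
    obtain ⟨r, h0, h1⟩ := key
    have : (r • (B - A)) +ᵥ A ∈ line[ℝ, A, B] :=
      vadd_left_mem_affineSpan_pair.mpr ⟨r, by simp⟩
    have hz : (r • (B - A)) +ᵥ A = z := by
      apply E2_ext
      · show (r • (B - A)) 0 + A 0 = z 0
        rw [smul_sub_apply]; linarith
      · show (r • (B - A)) 1 + A 1 = z 1
        rw [smul_sub_apply]; linarith
    rwa [hz] at this

/-! ### Half-angle parametrization of the circle -/

def Kd (v w : ℝ × ℝ) : ℝ := v.1 * w.2 - v.2 * w.1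

def Nd (v : ℝ × ℝ) : ℝ := v.1 ^ 2 + v.2 ^ 2

lemma Nd_pos {v : ℝ × ℝ} (hv : v ≠ 0) : 0 < Nd v := by
  have h : v.1 ≠ 0 ∨ v.2 ≠ 0 := by
    by_contra hc
    push_neg at hc
    exact hv (Prod.ext hc.1 hc.2)
  rcases h with h | h <;> [skip; skip] <;> unfold Nd <;> positivity

noncomputable def Phi (o : E2) (ρ : ℝ) (v : ℝ × ℝ) : E2 :=
  ptE (o 0 + ρ * (v.1 ^ 2 - v.2 ^ 2) / Nd v) (o 1 + 2 * ρ * v.1 * v.2 / Nd v)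

lemma Phi_mem_sphere {o : E2} {ρ : ℝ} (hρ : 0 < ρ) {v : ℝ × ℝ} (hv : v ≠ 0) :
    Phi o ρ v ∈ sphere o ρ := by
  rw [mem_sphere_iff hρ]
  have hN := (Nd_pos hv).ne'
  simp only [Phi, ptE_zero, ptE_one]
  field_simp
  unfold Nd at *
  ring

lemma Phi_smul {o : E2} {ρ : ℝ} {t : ℝ} (ht : t ≠ 0) (v : ℝ × ℝ) :
    Phi o ρ (t * v.1, t * v.2) = Phi o ρ v := by
  rcases eq_or_ne v 0 with rfl | hv
  · simp; rfl
  have hN := (Nd_pos hv).ne'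
  have hN2 : Nd (t * v.1, t * v.2) ≠ 0 := by
    have : Nd (t * v.1, t * v.2) = t ^ 2 * Nd v := by unfold Nd; ring
    rw [this]; positivity
  apply E2_ext <;> simp only [Phi, ptE_zero, ptE_one] <;>
    [skip; skip] <;> unfold Nd at * <;> field_simp <;> ring

lemma Phi_surj {o : E2} {ρ : ℝ} (hρ : 0 < ρ) {z : E2} (hz : z ∈ sphere o ρ) :
    ∃ v : ℝ × ℝ, v ≠ 0 ∧ Phi o ρ v = z := by
  rw [mem_sphere_iff hρ] at hz
  set c := z 0 - o 0 with hc
  set s := z 1 - o 1 with hs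
  rcases eq_or_ne (ρ + c) 0 with h0 | h0
  · have hc0 : c = -ρ := by linarith
    have hs0 : s = 0 := by nlinarith
    refine ⟨(0, 1), by simp, ?_⟩
    apply E2_ext <;> simp only [Phi, ptE_zero, ptE_one, Nd] <;> norm_num <;> linarith
  · refine ⟨(ρ + c, s), fun hcon => h0 (congrArg Prod.fst hcon), ?_⟩
    have hN : Nd (ρ + c, s) = 2 * ρ * (ρ + c) := by
      show (ρ + c) ^ 2 + s ^ 2 = _
      linear_combination hz
    have h2ρ : 2 * ρ * (ρ + c) ≠ 0 := by
      intro hcon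
      rcases mul_eq_zero.mp hcon with h | h
      · have : ρ = 0 := by linarith
        exact hρ.ne' this
      · exact h0 h
    apply E2_ext <;> simp only [Phi, ptE_zero, ptE_one, hN]
    · have h3 : ρ * ((ρ + c, s).1 ^ 2 - (ρ + c, s).2 ^ 2) = c * (2 * ρ * (ρ + c)) := by
        show ρ * ((ρ + c) ^ 2 - s ^ 2) = _
        linear_combination (-ρ) * hz
      rw [h3, mul_div_assoc, div_self h2ρ, mul_one]
      linarith
    · have h3 : 2 * ρ * (ρ + c, s).1 * (ρ + c, s).2 = s * (2 * ρ * (ρ + c)) := by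
        show 2 * ρ * (ρ + c) * s = _
        ring
      rw [h3, mul_div_assoc, div_self h2ρ, mul_one]
      linarith

lemma parallel_of_K {v w : ℝ × ℝ} (hv : v ≠ 0) (h : Kd v w = 0) :
    ∃ t : ℝ, w = (t * v.1, t * v.2) := by
  have h' : v.1 * w.2 - v.2 * w.1 = 0 := h
  have hv' : v.1 ≠ 0 ∨ v.2 ≠ 0 := by
    by_contra hc; push_neg at hc; exact hv (Prod.ext hc.1 hc.2)
  rcases hv' with h1 | h1
  · refine ⟨w.1 / v.1, ?_⟩
    have : w.2 = w.1 / v.1 * v.2 := by field_simp; nlinarith [h']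
    exact Prod.ext (by field_simp) this
  · refine ⟨w.2 / v.2, ?_⟩
    have : w.1 = w.2 / v.2 * v.1 := by field_simp; nlinarith [h']
    exact Prod.ext this (by field_simp)

lemma Phi_inj {o : E2} {ρ : ℝ} (hρ : 0 < ρ) {v w : ℝ × ℝ} (hv : v ≠ 0) (hw : w ≠ 0)
    (h : Phi o ρ v = Phi o ρ w) : Kd v w = 0 := by
  have hNv := (Nd_pos hv).ne'
  have hNw := (Nd_pos hw).ne'
  have h0 : (v.1 ^ 2 - v.2 ^ 2) * Nd w = (w.1 ^ 2 - w.2 ^ 2) * Nd v := by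
    have := congrFun (congrArg (fun q : E2 => (q : Fin 2 → ℝ)) h) 0
    simp only [Phi, ptE_zero] at this
    have h' : ρ * (v.1 ^ 2 - v.2 ^ 2) / Nd v = ρ * (w.1 ^ 2 - w.2 ^ 2) / Nd w := by
      linarith [this]
    field_simp [hNv, hNw] at h'
    linear_combination h'
  have h1 : (v.1 * v.2) * Nd w = (w.1 * w.2) * Nd v := by
    have := congrFun (congrArg (fun q : E2 => (q : Fin 2 → ℝ)) h) 1
    simp only [Phi, ptE_one] at this
    have h' : 2 * ρ * v.1 * v.2 / Nd v = 2 * ρ * w.1 * w.2 / Nd w := by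
      linarith [this]
    field_simp [hNv, hNw] at h'
    have h2 : (2 : ℝ) * ρ ≠ 0 := by positivity
    linear_combination h'
  have key : Kd v w * (Nd v * Nd w) = 0 := by
    unfold Kd Nd at *
    linear_combination ((v.1 * w.2 + v.2 * w.1) / 2) * h0 - (v.1 * w.1 - v.2 * w.2) * h1
  have : Nd v * Nd w ≠ 0 := mul_ne_zero hNv hNw
  exact (mul_eq_zero.mp key).resolve_right this

lemma Phi_eq_of_K {o : E2} {ρ : ℝ} {v w : ℝ × ℝ} (hv : v ≠ 0) (hw : w ≠ 0)
    (h : Kd v w = 0) : Phi o ρ v = Phi o ρ w := by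
  obtain ⟨t, rfl⟩ := parallel_of_K hv h
  have ht : t ≠ 0 := by
    rintro rfl
    exact hw (by simp)
  exact (Phi_smul ht v).symm

/-! ### 2×2 matrices -/

@[ext] structure M2 where
  a : ℝ
  b : ℝ
  c : ℝ
  d : ℝ

namespace M2

def app (A : M2) (v : ℝ × ℝ) : ℝ × ℝ := (A.a * v.1 + A.b * v.2, A.c * v.1 + A.d * v.2)

def mul (A B : M2) : M2 :=
  ⟨A.a * B.a + A.b * B.c, A.a * B.b + A.b * B.d, A.c * B.a + A.d * B.c, A.c * B.b + A.d * B.d⟩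

def det (A : M2) : ℝ := A.a * A.d - A.b * A.c

def one : M2 := ⟨1, 0, 0, 1⟩

def smul (t : ℝ) (A : M2) : M2 := ⟨t * A.a, t * A.b, t * A.c, t * A.d⟩

def add (A B : M2) : M2 := ⟨A.a + B.a, A.b + B.b, A.c + B.c, A.d + B.d⟩

def tr (A : M2) : ℝ := A.a + A.d

lemma mul_app (A B : M2) (v : ℝ × ℝ) : (A.mul B).app v = A.app (B.app v) := by
  simp only [app, mul]
  exact Prod.ext (by ring) (by ring)

lemma app_ne_zero {A : M2} (hA : A.det ≠ 0) {v : ℝ × ℝ} (hv : v ≠ 0) : A.app v ≠ 0 := by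
  intro hcon
  have h1 : A.a * v.1 + A.b * v.2 = 0 := congrArg Prod.fst hcon
  have h2 : A.c * v.1 + A.d * v.2 = 0 := congrArg Prod.snd hcon
  apply hv
  have hv1 : A.det * v.1 = 0 := by unfold det; linear_combination A.d * h1 - A.b * h2
  have hv2 : A.det * v.2 = 0 := by unfold det; linear_combination A.a * h2 - A.c * h1
  exact Prod.ext ((mul_eq_zero.mp hv1).resolve_left hA) ((mul_eq_zero.mp hv2).resolve_left hA)

/-- the `R`-subalgebra element `α·1 + β·Q` -/
def R (Q : M2) (α β : ℝ) : M2 := add (smul α one) (smul β Q)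

lemma R_mul (Q : M2) (α β α' β' : ℝ) :
    (R Q α' β').mul (R Q α β) =
      R Q (α * α' - β * β' * Q.det) (α * β' + α' * β + β * β' * Q.tr) := by
  obtain ⟨a, b, c, d⟩ := Q
  simp only [R, add, smul, one, mul, det, tr]
  ext <;> dsimp <;> ring

/-- product of two members of the pencil `A₀ + t·D` of trace-zero matrices. -/
lemma pair_mul (A₀ D : M2) (h₀ : A₀.a + A₀.d = 0) (hD : D.a + D.d = 0) (s t : ℝ) :
    (add A₀ (smul t D)).mul (add A₀ (smul s D)) =
      R (A₀.mul D) (-(A₀.det) - t * s * D.det + t * ((A₀.mul D).tr)) (s - t) := by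
  obtain ⟨a, b, c, d⟩ := A₀
  obtain ⟨u, v, w, e⟩ := D
  simp only at h₀ hD
  have hd : d = -a := by linarith
  have he : e = -u := by linarith
  subst hd he
  simp only [R, add, smul, one, mul, det, tr]
  ext <;> dsimp <;> ring

def vfold (L : List M2) (v : ℝ × ℝ) : ℝ × ℝ := L.foldl (fun u A => A.app u) v

@[simp] lemma vfold_nil (v : ℝ × ℝ) : vfold [] v = v := rfl

@[simp] lemma vfold_cons (A : M2) (L : List M2) (v : ℝ × ℝ) :
    vfold (A :: L) v = vfold L (A.app v) := rfl

@[simp] lemma one_app (v : ℝ × ℝ) : one.app v = v := by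
  simp only [app, one]
  exact Prod.ext (by ring) (by ring)

theorem even_fold (A₀ D : M2) (h₀ : A₀.a + A₀.d = 0) (hD : D.a + D.d = 0) :
    ∀ ts : List ℝ, Even ts.length → ∃ α β : ℝ, ∀ v : ℝ × ℝ,
      vfold (ts.map fun t => add A₀ (smul t D)) v = (R (A₀.mul D) α β).app v
  | [], _ => ⟨1, 0, fun v => by
      simp only [List.map_nil, vfold_nil, R, add, smul, one, mul, app]
      exact Prod.ext (by ring) (by ring)⟩
  | [t], h => by
      exfalso
      rcases h with ⟨k, hk⟩
      simp only [List.length_singleton] at hk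
      omega
  | s :: t :: rest, h => by
      have hr : Even rest.length := by
        rcases h with ⟨k, hk⟩
        simp only [List.length_cons] at hk
        exact ⟨k - 1, by omega⟩
      obtain ⟨α', β', ih⟩ := even_fold A₀ D h₀ hD rest hr
      set α₁ : ℝ := -(A₀.det) - t * s * D.det + t * ((A₀.mul D).tr) with hα₁
      refine ⟨α₁ * α' - (s - t) * β' * (A₀.mul D).det,
        α₁ * β' + α' * (s - t) + (s - t) * β' * (A₀.mul D).tr, fun v => ?_⟩
      calc vfold ((s :: t :: rest).map fun t => add A₀ (smul t D)) v
          = vfold (rest.map fun t => add A₀ (smul t D))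
              ((add A₀ (smul t D)).app ((add A₀ (smul s D)).app v)) := rfl
        _ = vfold (rest.map fun t => add A₀ (smul t D))
              (((add A₀ (smul t D)).mul (add A₀ (smul s D))).app v) := by rw [mul_app]
        _ = vfold (rest.map fun t => add A₀ (smul t D))
              ((R (A₀.mul D) (-(A₀.det) - t * s * D.det + t * ((A₀.mul D).tr)) (s - t)).app v) := by
            rw [pair_mul A₀ D h₀ hD]
        _ = (R (A₀.mul D) α' β').app
              ((R (A₀.mul D) (-(A₀.det) - t * s * D.det + t * ((A₀.mul D).tr)) (s - t)).app v) := by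
            rw [ih]
        _ = ((R (A₀.mul D) α' β').mul
              (R (A₀.mul D) (-(A₀.det) - t * s * D.det + t * ((A₀.mul D).tr)) (s - t))).app v := by
            rw [mul_app]
        _ = (R (A₀.mul D) (α₁ * α' - (s - t) * β' * (A₀.mul D).det)
              (α₁ * β' + α' * (s - t) + (s - t) * β' * (A₀.mul D).tr)).app v := by
            rw [R_mul, hα₁]

end M2

/-! ### The chord form and chord matrices -/

/-- The symmetric bilinear form whose vanishing `Bf o ρ q v w = 0` says that `q` lies on the
line through `Phi o ρ v` and `Phi o ρ w`. -/
def Bf (o : E2) (ρ : ℝ) (q : E2) (v w : ℝ × ℝ) : ℝ :=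
  ρ * (v.1 * w.1 + v.2 * w.2) - (q 0 - o 0) * (v.1 * w.1 - v.2 * w.2)
    - (q 1 - o 1) * (v.1 * w.2 + v.2 * w.1)

/-- The matrix of the chord involution with centre `q`. -/
def Amat (o : E2) (ρ : ℝ) (q : E2) : M2 :=
  ⟨q 1 - o 1, -(ρ + (q 0 - o 0)), ρ - (q 0 - o 0), -(q 1 - o 1)⟩

lemma Amat_tr (o : E2) (ρ : ℝ) (q : E2) : (Amat o ρ q).a + (Amat o ρ q).d = 0 := by
  simp [Amat]

lemma Amat_det (o : E2) (ρ : ℝ) (q : E2) :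
    (Amat o ρ q).det = ρ ^ 2 - ((q 0 - o 0) ^ 2 + (q 1 - o 1) ^ 2) := by
  simp only [Amat, M2.det]; ring

lemma Amat_det_ne_zero {o : E2} {ρ : ℝ} (hρ : 0 < ρ) {q : E2} (hq : q ∉ sphere o ρ) :
    (Amat o ρ q).det ≠ 0 := by
  rw [Amat_det]
  intro hcon
  exact hq ((mem_sphere_iff hρ).mpr (by linarith))

/-- The fundamental identity: the collinearity determinant of `Phi v`, `Phi w`, `q` factors as
`2ρ·K(v,w)·B_q(v,w) / (N v · N w)`. -/
lemma key_det {o : E2} {ρ : ℝ} {v w : ℝ × ℝ} (hv : v ≠ 0) (hw : w ≠ 0) (q : E2) :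
    ((Phi o ρ v) 0 - q 0) * ((Phi o ρ w) 1 - q 1)
      - ((Phi o ρ v) 1 - q 1) * ((Phi o ρ w) 0 - q 0)
      = 2 * ρ * Kd v w * Bf o ρ q v w / (Nd v * Nd w) := by
  have hNv := (Nd_pos hv).ne'
  have hNw := (Nd_pos hw).ne'
  simp only [Phi, ptE_zero, ptE_one, Bf, Kd]
  field_simp
  unfold Nd at *
  ring

/-- `B_q(v, A_q v) = 0` : the chord image is on the line through `Phi v` and `q`. -/
lemma B_app (o : E2) (ρ : ℝ) (q : E2) (v : ℝ × ℝ) :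
    Bf o ρ q v ((Amat o ρ q).app v) = 0 := by
  simp only [Bf, Amat, M2.app]
  ring

/-- `K(w, A_q v) = B_q(v, w)` : orthogonality relation. -/
lemma K_app (o : E2) (ρ : ℝ) (q : E2) (v w : ℝ × ℝ) :
    Kd w ((Amat o ρ q).app v) = Bf o ρ q v w := by
  simp only [Bf, Amat, M2.app, Kd]
  ring

/-- `B` vanishes at `q = Phi v` (a point is on its own tangent/chords). -/
lemma B_at_Phi {o : E2} {ρ : ℝ} {v : ℝ × ℝ} (hv : v ≠ 0) (w : ℝ × ℝ) :
    Bf o ρ (Phi o ρ v) v w = 0 := by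
  have hNv := (Nd_pos hv).ne'
  simp only [Bf, Phi, ptE_zero, ptE_one]
  field_simp
  unfold Nd at *
  ring

/-- The chord map through `p` is computed by the matrix `Amat o ρ p`. -/
lemma chordmap_eq {o : E2} {ρ : ℝ} (hρ : 0 < ρ) {p : E2} (hp : p ∉ sphere o ρ)
    {Ip : E2 → E2} (hI : ChordMap o ρ p Ip) {v : ℝ × ℝ} (hv : v ≠ 0) :
    Ip (Phi o ρ v) = Phi o ρ ((Amat o ρ p).app v) := by
  have hdet := Amat_det_ne_zero hρ hp
  set w := (Amat o ρ p).app v with hwdef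
  have hw : w ≠ 0 := M2.app_ne_zero hdet hv
  set x := Phi o ρ v with hxdef
  set y := Phi o ρ w with hydef
  have hxS : x ∈ sphere o ρ := Phi_mem_sphere hρ hv
  have hyS : y ∈ sphere o ρ := Phi_mem_sphere hρ hw
  have hxp : x ≠ p := fun hcon => hp (hcon ▸ hxS)
  -- y lies on the line through x and p
  have hyL : y ∈ affineSpan ℝ ({x, p} : Set E2) := by
    rw [mem_line_iff hxp]
    have h1 := key_det (o := o) (ρ := ρ) hv hw p
    rw [hwdef] at h1
    rw [B_app] at h1
    rw [← hwdef, ← hxdef, ← hydef] at h1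
    simp only [mul_zero, zero_div] at h1
    linear_combination h1
  -- any point of the circle on the line through x and p is x or y
  have huniq : ∀ z ∈ sphere o ρ, z ∈ affineSpan ℝ ({x, p} : Set E2) → z = x ∨ z = y := by
    intro z hzS hzL
    obtain ⟨u, hu, hzu⟩ := Phi_surj hρ hzS
    rw [mem_line_iff hxp] at hzL
    have h1 := key_det (o := o) (ρ := ρ) hv hu p
    rw [← hxdef, hzu] at h1
    have h2 : 2 * ρ * Kd v u * Bf o ρ p v u / (Nd v * Nd u) = 0 := by
      rw [← h1]; linear_combination hzL
    have hNv := (Nd_pos hv).ne'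
    have hNu := (Nd_pos hu).ne'
    have hne : (Nd v * Nd u) ≠ 0 := mul_ne_zero hNv hNu
    have h4 : 2 * ρ * Kd v u * Bf o ρ p v u = 0 :=
      (div_eq_zero_iff.mp h2).resolve_right hne
    have h3 : Kd v u * Bf o ρ p v u = 0 := by
      have h2ρ : (2 : ℝ) * ρ ≠ 0 := by positivity
      have h5 : (2 * ρ) * (Kd v u * Bf o ρ p v u) = 0 := by linear_combination h4
      exact (mul_eq_zero.mp h5).resolve_left h2ρ
    rcases mul_eq_zero.mp h3 with h | h
    · left
      rw [← hzu, hxdef]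
      exact Phi_eq_of_K hu hv (by unfold Kd at h ⊢; linarith)
    · right
      rw [← hzu, hydef]
      apply Phi_eq_of_K hu hw
      rw [hwdef, K_app]
      exact h
  obtain ⟨hIS, hIL, hIuniq⟩ := hI x hxS
  rcases hIuniq y hyS hyL with h | h
  · -- y = x : tangent case, then Ip x = x = y
    rcases huniq (Ip x) hIS hIL with h2 | h2
    · rw [h2, h]
    · exact h2
  · exact h.symm

/-- The direction matrix of the pencil of chord matrices of points on the line `w₁w₂`. -/
def Dmat (w₁ w₂ : E2) : M2 :=
  ⟨w₂ 1 - w₁ 1, -(w₂ 0 - w₁ 0), -(w₂ 0 - w₁ 0), -(w₂ 1 - w₁ 1)⟩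

lemma Dmat_tr (w₁ w₂ : E2) : (Dmat w₁ w₂).a + (Dmat w₁ w₂).d = 0 := by simp [Dmat]

/-- Core geometric contradiction: if `vx` is an eigenvector of `Q = A_{p₀}·D` then
`Phi vx` lies on the line `w₁w₂`. -/
lemma no_eigen {o : E2} {ρ : ℝ} (hρ : 0 < ρ) {w₁ w₂ p₀ : E2} (hw : w₁ ≠ w₂)
    (hdet : (Amat o ρ p₀).det ≠ 0) {t₀ : ℝ}
    (hp₀ : ∀ i : Fin 2, p₀ i - w₁ i = t₀ * (w₂ i - w₁ i))
    {vx : ℝ × ℝ} (hvx : vx ≠ 0)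
    (hxl : Phi o ρ vx ∉ affineSpan ℝ ({w₁, w₂} : Set E2))
    (hQ : Kd (((Amat o ρ p₀).mul (Dmat w₁ w₂)).app vx) vx = 0) : False := by
  set a := vx.1 with ha
  set b := vx.2 with hb
  set m1 : ℝ := (ρ - (p₀ 0 - o 0)) * a - (p₀ 1 - o 1) * b with hm1
  set m2 : ℝ := -(p₀ 1 - o 1) * a + (ρ + (p₀ 0 - o 0)) * b with hm2
  set W1 : ℝ := w₂ 0 - w₁ 0 with hW1
  set W2 : ℝ := w₂ 1 - w₁ 1 with hW2
  -- step 1 : K(m, u) = 0 where u = D_M v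
  have hKmu : m1 * (-W2 * a + W1 * b) - m2 * (-W1 * a - W2 * b) = 0 := by
    have hid : (Amat o ρ p₀).det * (m1 * (-W2 * a + W1 * b) - m2 * (-W1 * a - W2 * b))
        = (Amat o ρ p₀).det * (Kd (((Amat o ρ p₀).mul (Dmat w₁ w₂)).app vx) vx) := by
      simp only [Amat, Dmat, M2.det, M2.mul, M2.app, Kd, hm1, hm2, hW1, hW2, ha, hb]
      ring
    rw [hQ, mul_zero] at hid
    exact (mul_eq_zero.mp hid).resolve_left hdet
  -- step 2 : m ≠ 0
  have hm : ¬(m1 = 0 ∧ m2 = 0) := by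
    rintro ⟨h1, h2⟩
    have hMdet : (⟨ρ - (p₀ 0 - o 0), -(p₀ 1 - o 1), -(p₀ 1 - o 1), ρ + (p₀ 0 - o 0)⟩ : M2).det ≠ 0 := by
      have : (⟨ρ - (p₀ 0 - o 0), -(p₀ 1 - o 1), -(p₀ 1 - o 1), ρ + (p₀ 0 - o 0)⟩ : M2).det
          = (Amat o ρ p₀).det := by
        simp only [Amat, M2.det]; ring
      rw [this]; exact hdet
    apply M2.app_ne_zero hMdet hvx
    have e1 : (⟨ρ - (p₀ 0 - o 0), -(p₀ 1 - o 1), -(p₀ 1 - o 1), ρ + (p₀ 0 - o 0)⟩ : M2).app vx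
        = (m1, m2) := by
      simp only [M2.app, hm1, hm2, ha, hb]
      exact Prod.ext (by ring) (by ring)
    rw [e1, h1, h2]
    rfl
  -- step 3 : u = lam • m
  have hKmu' : Kd (m1, m2) (-W1 * a - W2 * b, -W2 * a + W1 * b) = 0 := by
    simp only [Kd]
    linear_combination hKmu
  have hmne : (m1, m2) ≠ (0 : ℝ × ℝ) := by
    intro hcon
    exact hm ⟨congrArg Prod.fst hcon, congrArg Prod.snd hcon⟩
  obtain ⟨lam, hlam⟩ := parallel_of_K hmne hKmu'
  have hu1 : -W1 * a - W2 * b = lam * m1 := congrArg Prod.fst hlam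
  have hu2 : -W2 * a + W1 * b = lam * m2 := congrArg Prod.snd hlam
  -- step 4 : B vanishes along the whole line
  have key : ∀ (q : E2) (τ : ℝ), p₀ 0 - q 0 = τ * W1 → p₀ 1 - q 1 = τ * W2 →
      Bf o ρ q vx (-m2, m1) = 0 := by
    intro q τ hq0 hq1
    simp only [Bf, ← ha, ← hb]
    linear_combination (-(a * m2) - b * m1) * hq0 + (a * m1 - b * m2) * hq1
      + (τ * m2) * hu1 + (-(τ * m1)) * hu2
  have hB1 : Bf o ρ w₁ vx (-m2, m1) = 0 := by
    refine key w₁ t₀ ?_ ?_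
    · rw [hW1]; exact hp₀ 0
    · rw [hW2]; exact hp₀ 1
  have hB2 : Bf o ρ w₂ vx (-m2, m1) = 0 := by
    refine key w₂ (t₀ - 1) ?_ ?_
    · rw [hW1]; have := hp₀ 0; linarith
    · rw [hW2]; have := hp₀ 1; linarith
  have hBx : Bf o ρ (Phi o ρ vx) vx (-m2, m1) = 0 := B_at_Phi hvx _
  -- step 5 : gradient argument
  set x := Phi o ρ vx with hx
  set G1 : ℝ := -(a * m2) - b * m1 with hG1
  set G2 : ℝ := a * m1 - b * m2 with hG2
  have eqA : G1 * W1 + G2 * W2 = 0 := by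
    simp only [Bf, ← ha, ← hb] at hB1 hB2
    rw [hG1, hG2, hW1, hW2]
    linear_combination hB1 - hB2
  have eqB : G1 * (x 0 - w₁ 0) + G2 * (x 1 - w₁ 1) = 0 := by
    simp only [Bf, ← ha, ← hb] at hB1 hBx
    rw [hG1, hG2]
    linear_combination hB1 - hBx
  have hGpos : 0 < G1 ^ 2 + G2 ^ 2 := by
    have hab : 0 < a ^ 2 + b ^ 2 := by
      have := Nd_pos hvx
      unfold Nd at this
      rw [← ha, ← hb] at this
      exact this
    have hmm : 0 < m1 ^ 2 + m2 ^ 2 := by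
      rcases not_and_or.mp hm with h | h
      · positivity
      · positivity
    have : G1 ^ 2 + G2 ^ 2 = (a ^ 2 + b ^ 2) * (m1 ^ 2 + m2 ^ 2) := by
      rw [hG1, hG2]; ring
    rw [this]
    positivity
  have hdet0 : W1 * (x 1 - w₁ 1) - W2 * (x 0 - w₁ 0) = 0 := by
    have hcomb : (W1 * (x 1 - w₁ 1) - W2 * (x 0 - w₁ 0)) * (G1 ^ 2 + G2 ^ 2) = 0 := by
      linear_combination (G1 * (x 1 - w₁ 1) - G2 * (x 0 - w₁ 0)) * eqA
        + (G2 * W1 - G1 * W2) * eqB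
    exact (mul_eq_zero.mp hcomb).resolve_right (ne_of_gt hGpos)
  apply hxl
  rw [mem_line_iff hw]
  rw [hW1, hW2] at hdet0
  linear_combination -hdet0

end Porism

open Porism Porism.M2

/-- For an even number of collinear points `p₁, …, pₙ` (none on the circle), if the chain of
chords closes for one starting point `x ∈ C` not on the line, then the composition
`I_{pₙ} ∘ ⋯ ∘ I_{p₁}` is the identity map of the circle. -/
theorem castillon_even_collinear_porism
    (o : E2) (ρ : ℝ) (hρ : 0 < ρ)
    (n : ℕ) (hn : Even n)
    -- the line ℓ
    (w₁ w₂ : E2) (hw : w₁ ≠ w₂)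
    (p : Fin n → E2)
    (hpl : ∀ i, p i ∈ affineSpan ℝ ({w₁, w₂} : Set E2))
    (hpC : ∀ i, p i ∉ sphere o ρ)
    (I : Fin n → E2 → E2) (hI : ∀ i, ChordMap o ρ (p i) (I i))
    (x : E2) (hx : x ∈ sphere o ρ)
    (hxl : x ∉ affineSpan ℝ ({w₁, w₂} : Set E2))
    (hclose : chain (List.ofFn I) x = x) :
    ∀ y ∈ sphere o ρ, chain (List.ofFn I) y = y := by
  rcases Nat.eq_zero_or_pos n with hn0 | hpos
  · subst hn0
    intro y hy
    simp [chain, List.ofFn_zero]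
  have ht' : ∀ i, ∃ t : ℝ, ∀ j : Fin 2, p i j - w₁ j = t * (w₂ j - w₁ j) := by
    intro i
    have h2 : (p i - w₁) +ᵥ w₁ ∈ line[ℝ, w₁, w₂] := by simpa using hpl i
    obtain ⟨r, hr⟩ := vadd_left_mem_affineSpan_pair.mp h2
    refine ⟨r, fun j => ?_⟩
    have := congrFun (congrArg (fun q : E2 => (q : Fin 2 → ℝ)) hr) j
    have h3 : r * (w₂ j - w₁ j) = p i j - w₁ j := by simpa using this
    linarith
  choose t ht using ht'
  set i₀ : Fin n := ⟨0, hpos⟩ with hi₀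
  set A₀ := Amat o ρ (p i₀) with hA₀
  set D := Dmat w₁ w₂ with hD
  have hpen : ∀ i, Amat o ρ (p i) = A₀.add (M2.smul (t i - t i₀) D) := by
    intro i
    have h0 : p i 0 - p i₀ 0 = (t i - t i₀) * (w₂ 0 - w₁ 0) := by
      have e1 := ht i 0; have e2 := ht i₀ 0; linarith
    have h1 : p i 1 - p i₀ 1 = (t i - t i₀) * (w₂ 1 - w₁ 1) := by
      have e1 := ht i 1; have e2 := ht i₀ 1; linarith
    rw [hA₀, hD]
    simp only [Amat, Dmat, M2.add, M2.smul]
    ext <;> dsimp <;> linarith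
  have fold : ∀ (l : List (Fin n)) (v : ℝ × ℝ), v ≠ 0 →
      vfold (l.map fun i => Amat o ρ (p i)) v ≠ 0 ∧
      chain (l.map I) (Phi o ρ v)
        = Phi o ρ (vfold (l.map fun i => Amat o ρ (p i)) v) := by
    intro l
    induction l with
    | nil => intro v hv; exact ⟨hv, rfl⟩
    | cons i l ih =>
      intro v hv
      have hdet := Amat_det_ne_zero hρ (hpC i)
      have hv' := app_ne_zero hdet hv
      have hstep := chordmap_eq hρ (hpC i) (hI i) hv
      constructor
      · simpa using (ih _ hv').1
      · calc chain ((i :: l).map I) (Phi o ρ v)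
            = chain (l.map I) (I i (Phi o ρ v)) := rfl
          _ = chain (l.map I) (Phi o ρ ((Amat o ρ (p i)).app v)) := by rw [hstep]
          _ = _ := by simpa using (ih _ hv').2
  obtain ⟨α, β, hR⟩ := even_fold A₀ D (by rw [hA₀]; exact Amat_tr o ρ (p i₀))
    (by rw [hD]; exact Dmat_tr w₁ w₂)
    ((List.finRange n).map fun i => t i - t i₀) (by simpa using hn)
  have main : ∀ v : ℝ × ℝ, v ≠ 0 →
      chain (List.ofFn I) (Phi o ρ v) = Phi o ρ ((R (A₀.mul D) α β).app v)
        ∧ (R (A₀.mul D) α β).app v ≠ 0 := by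
    intro v hv
    have h1 := fold (List.finRange n) v hv
    have hmaps : (List.finRange n).map (fun i => Amat o ρ (p i))
        = ((List.finRange n).map fun i => t i - t i₀).map
            (fun s => A₀.add (M2.smul s D)) := by
      rw [List.map_map]
      exact List.map_congr_left (fun i _ => hpen i)
    rw [hmaps, hR v] at h1
    exact ⟨by rw [List.ofFn_eq_map]; exact h1.2, h1.1⟩
  obtain ⟨vx, hvx, hvxPhi⟩ := Phi_surj hρ hx
  have hclose' : Phi o ρ ((R (A₀.mul D) α β).app vx) = Phi o ρ vx := by
    rw [← (main vx hvx).1, hvxPhi, hclose]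
  have hK : Kd ((R (A₀.mul D) α β).app vx) vx = 0 :=
    Phi_inj hρ (main vx hvx).2 hvx hclose'
  have hKQ : β * Kd ((A₀.mul D).app vx) vx = 0 := by
    have hexp : Kd ((R (A₀.mul D) α β).app vx) vx = β * Kd ((A₀.mul D).app vx) vx := by
      simp only [R, M2.add, M2.smul, M2.one, M2.app, Kd]
      ring
    rw [← hexp]; exact hK
  rcases mul_eq_zero.mp hKQ with hβ | hQ0
  · intro y hy
    obtain ⟨u, hu, huPhi⟩ := Phi_surj hρ hy
    have hα : α ≠ 0 := by
      intro hα0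
      apply (main vx hvx).2
      rw [hα0, hβ]
      simp [R, M2.add, M2.smul, M2.one, M2.app, Prod.ext_iff]
    have hRα : (R (A₀.mul D) α β).app u = (α * u.1, α * u.2) := by
      rw [hβ]
      simp only [R, M2.add, M2.smul, M2.one, M2.app]
      exact Prod.ext (by ring) (by ring)
    rw [← huPhi, (main u hu).1, hRα, Phi_smul hα u]
  · exfalso
    exact no_eigen hρ hw (Amat_det_ne_zero hρ (hpC i₀)) (ht i₀) hvx
      (by rwa [hvxPhi]) hQ0
end

section
/- Let n ≥ 3 and let p₁, …, pₙ be points strictly inside the circle C (dist(pᵢ, o) < ρ), with indices taken cyclically (p_{n+1} = p₁, p₀ = pₙ), such that consecutive points are distinct and no line Lᵢ through pᵢ and p_{i+1} passes through the center o. Assume that for every i the line L_{i+1} passes through the pole of Lᵢ with respect to C (this says that p₁p₂⋯pₙ is a right-angled polygon in the Cayley–Klein model of the hyperbolic plane inside C). Then I_{pₙ} ∘ ⋯ ∘ I_{p₁} is the identity map of C. -/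
open Metric
open scoped RealInnerProductSpace

/-- Explicit second-intersection (chord) map. -/
noncomputable def chordF (o q x : E2) : E2 :=
  (-(2 * ⟪x - o, q - x⟫) / ‖q - x‖ ^ 2) • (q - x) + x

lemma normsq_line (o x q : E2) (r : ℝ) :
    ‖(r • (q - x) + x) - o‖ ^ 2
      = ‖x - o‖ ^ 2 + r * (2 * ⟪x - o, q - x⟫ + r * ‖q - x‖ ^ 2) := by
  have h : (r • (q - x) + x) - o = r • (q - x) + (x - o) := by abel
  rw [h, norm_add_sq_real, real_inner_smul_left, norm_smul, real_inner_comm]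
  simp [mul_pow, sq_abs]
  ring

lemma chordF_sphere {o q x : E2} {ρ : ℝ} (hx : x ∈ sphere o ρ) (hq : q ≠ x) :
    chordF o q x ∈ sphere o ρ := by
  rw [mem_sphere, dist_eq_norm] at hx ⊢
  have hd : ‖q - x‖ ^ 2 ≠ 0 := pow_ne_zero _ (norm_ne_zero_iff.mpr (sub_ne_zero.mpr hq))
  have h1 : ‖chordF o q x - o‖ ^ 2 = ρ ^ 2 := by
    rw [chordF, normsq_line, hx]
    rw [div_mul_cancel₀ _ hd]
    ring
  have h0 : 0 ≤ ρ := hx ▸ norm_nonneg _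
  nlinarith [norm_nonneg (chordF o q x - o)]

lemma chordF_mem_line (o q x : E2) :
    chordF o q x ∈ affineSpan ℝ ({x, q} : Set E2) := by
  have := smul_vsub_vadd_mem_affineSpan_pair
    (-(2 * ⟪x - o, q - x⟫) / ‖q - x‖ ^ 2) x q
  simpa [chordF, vsub_eq_sub, vadd_eq_add] using this

lemma chordF_unique {o q x z : E2} {ρ : ℝ} (hx : x ∈ sphere o ρ) (hz : z ∈ sphere o ρ)
    (hq : q ≠ x) (hline : z ∈ affineSpan ℝ ({x, q} : Set E2)) :
    z = x ∨ z = chordF o q x := by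
  rw [mem_sphere, dist_eq_norm] at hx hz
  have hd : ‖q - x‖ ^ 2 ≠ 0 := pow_ne_zero _ (norm_ne_zero_iff.mpr (sub_ne_zero.mpr hq))
  have hline' : (z - x) +ᵥ x ∈ affineSpan ℝ ({x, q} : Set E2) := by
    simpa [vadd_eq_add] using hline
  obtain ⟨r, hr⟩ := vadd_left_mem_affineSpan_pair.mp hline'
  rw [vsub_eq_sub] at hr
  have hzeq : z = r • (q - x) + x := by rw [hr]; abel
  have h2 := normsq_line o x q r
  rw [← hzeq, hz, hx] at h2
  have h3 : r * (2 * ⟪x - o, q - x⟫ + r * ‖q - x‖ ^ 2) = 0 := by linarith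
  rcases mul_eq_zero.mp h3 with h | h
  · left; rw [hzeq, h]; simp
  · right
    have hr' : r = -(2 * ⟪x - o, q - x⟫) / ‖q - x‖ ^ 2 := by
      rw [eq_div_iff hd]
      linarith
    rw [hzeq, chordF, hr']

lemma chordF_tangent {o q x : E2} (h : ⟪x - o, q - x⟫ = 0) : chordF o q x = x := by
  simp [chordF, h]

lemma chordMap_eq {o q : E2} {ρ : ℝ} {I : E2 → E2} (hCM : ChordMap o ρ q I)
    (hq : ‖q - o‖ ≠ ρ) {x : E2} (hx : x ∈ sphere o ρ) : I x = chordF o q x := by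
  have hqx : q ≠ x := by
    intro h; apply hq; rw [h]; rw [mem_sphere, dist_eq_norm] at hx; exact hx
  obtain ⟨h1, h2, h3⟩ := hCM x hx
  rcases chordF_unique hx h1 hqx h2 with h | h
  · rcases h3 (chordF o q x) (chordF_sphere hx hqx) (chordF_mem_line o q x) with h' | h'
    · rw [h, h']
    · exact h'.symm
  · exact h

lemma chordF_invol {o q x : E2} {ρ : ℝ} (hx : x ∈ sphere o ρ) (hq : ‖q - o‖ ≠ ρ) :
    chordF o q (chordF o q x) = x := by
  have hqx : q ≠ x := by
    intro h; apply hq; rw [h]; rw [mem_sphere, dist_eq_norm] at hx; exact hx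
  set y := chordF o q x with hy
  have hys : y ∈ sphere o ρ := chordF_sphere hx hqx
  have hqy : q ≠ y := by
    intro h; apply hq; rw [h]; rw [mem_sphere, dist_eq_norm] at hys; exact hys
  set s : ℝ := -(2 * ⟪x - o, q - x⟫) / ‖q - x‖ ^ 2 with hs
  have hy2 : y = s • (q - x) + x := rfl
  have hs1 : s ≠ 1 := by
    intro h
    apply hqy
    rw [hy2, h, one_smul]; abel
  have hline : x ∈ affineSpan ℝ ({y, q} : Set E2) := by
    have hqy2 : q - y = (1 - s) • (q - x) := by
      rw [hy2]
      rw [sub_smul, one_smul]; abel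
    have hkey : ((-s / (1 - s)) • (q - y)) +ᵥ y = x := by
      rw [hqy2, smul_smul, vadd_eq_add, hy2]
      have : -s / (1 - s) * (1 - s) = -s :=
        div_mul_cancel₀ (-s) (sub_ne_zero.mpr (Ne.symm hs1))
      rw [this]
      rw [neg_smul]; abel
    rw [← hkey]
    exact smul_vsub_vadd_mem_affineSpan_pair _ _ _
  rcases chordF_unique hys hx hqy hline with h | h
  · rw [← h] at hy ⊢
    exact hy.symm
  · exact h.symm

lemma inner_coords (w w' : E2) : ⟪w, w'⟫ = w 0 * w' 0 + w 1 * w' 1 := by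
  simp [PiLp.inner_apply, RCLike.inner_apply, conj_trivial, Fin.sum_univ_two]; ring

lemma normsq_coords (w : E2) : ‖w‖ ^ 2 = w 0 ^ 2 + w 1 ^ 2 := by
  rw [← real_inner_self_eq_norm_sq, inner_coords]; ring

lemma parallel_of_det {X Y : E2} (h : X 0 * Y 1 - X 1 * Y 0 = 0) (hY : Y ≠ 0) :
    ∃ r : ℝ, X = r • Y := by
  have hn : Y 0 ^ 2 + Y 1 ^ 2 ≠ 0 := by
    rw [← normsq_coords]
    exact pow_ne_zero _ (norm_ne_zero_iff.mpr hY)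
  refine ⟨(X 0 * Y 0 + X 1 * Y 1) / (Y 0 ^ 2 + Y 1 ^ 2), ?_⟩
  ext i
  fin_cases i
  · show X 0 = _ * Y 0
    field_simp
    linear_combination Y 1 * h
  · show X 1 = _ * Y 1
    field_simp
    linear_combination (- Y 0) * h

/-- The core polynomial identity (right-angle reflection decomposition), in coordinates. -/
lemma key_poly (a0 a1 p0 p1 u0 u1 v0 v1 s t ρ : ℝ)
    (hA : a0 ^ 2 + a1 ^ 2 = ρ ^ 2)
    (h2 : p0 * u0 + p1 * u1 = ρ ^ 2)
    (h3 : p0 * v0 + p1 * v1 = ρ ^ 2)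
    (h4 : u0 * v0 + u1 * v1 = ρ ^ 2)
    (hs : s * ((u0 - a0) ^ 2 + (u1 - a1) ^ 2) = -(2 * (a0 * (u0 - a0) + a1 * (u1 - a1))))
    (ht : t * ((p0 - a0) ^ 2 + (p1 - a1) ^ 2) = -(2 * (a0 * (p0 - a0) + a1 * (p1 - a1))))
    (hnP : (p0 - a0) ^ 2 + (p1 - a1) ^ 2 ≠ 0)
    (hnU : (u0 - a0) ^ 2 + (u1 - a1) ^ 2 ≠ 0) :
    (s * (u0 - a0) + (a0 - v0)) * (t * (p1 - a1) + (a1 - v1))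
      - (s * (u1 - a1) + (a1 - v1)) * (t * (p0 - a0) + (a0 - v0)) = 0 := by
  rw [← hA] at h2 h3 h4
  have H : (((u0 - a0) ^ 2 + (u1 - a1) ^ 2) * ((p0 - a0) ^ 2 + (p1 - a1) ^ 2)) *
      ((s * (u0 - a0) + (a0 - v0)) * (t * (p1 - a1) + (a1 - v1))
        - (s * (u1 - a1) + (a1 - v1)) * (t * (p0 - a0) + (a0 - v0))) = 0 := by
    linear_combination
      (((u0 - a0) ^ 2 + (u1 - a1) ^ 2) * ((a0 - v0) * (p1 - a1) - (a1 - v1) * (p0 - a0))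
        + s * ((u0 - a0) ^ 2 + (u1 - a1) ^ 2) *
            ((u0 - a0) * (p1 - a1) - (u1 - a1) * (p0 - a0))) * ht
      + (((p0 - a0) ^ 2 + (p1 - a1) ^ 2) * ((u0 - a0) * (a1 - v1) - (u1 - a1) * (a0 - v0))
        - 2 * (a0 * (p0 - a0) + a1 * (p1 - a1)) *
            ((u0 - a0) * (p1 - a1) - (u1 - a1) * (p0 - a0))) * hs
      + (2 * ((a0 * (p0 - a0) + a1 * (p1 - a1)) * ((u0 - a0) * (a1 - v1) - (u1 - a1) * (a0 - v0))
            + (a0 * (u0 - a0) + a1 * (u1 - a1)) *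
              ((a0 - v0) * (p1 - a1) - (a1 - v1) * (p0 - a0)))) * h2
      + (2 * (a0 * (u0 - a0) + a1 * (u1 - a1)) *
          ((u0 - a0) * (p1 - a1) - (u1 - a1) * (p0 - a0))) * h3
      + (2 * (a0 * (p0 - a0) + a1 * (p1 - a1)) *
          ((u0 - a0) * (p1 - a1) - (u1 - a1) * (p0 - a0))) * h4
  exact (mul_eq_zero.mp H).resolve_left (mul_ne_zero hnU hnP)

set_option maxHeartbeats 1000000 in
lemma key_step {o p u v x : E2} {ρ : ℝ} (hx : x ∈ sphere o ρ)
    (hp : ‖p - o‖ < ρ) (hu : ρ < ‖u - o‖) (hv : ρ < ‖v - o‖)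
    (h2 : ⟪p - o, u - o⟫ = ρ ^ 2) (h3 : ⟪p - o, v - o⟫ = ρ ^ 2)
    (h4 : ⟪u - o, v - o⟫ = ρ ^ 2) :
    chordF o v (chordF o p x) = chordF o u x := by
  have hxn : ‖x - o‖ = ρ := by rw [mem_sphere, dist_eq_norm] at hx; exact hx
  have hpx : p ≠ x := by intro h; rw [h, hxn] at hp; exact lt_irrefl _ hp
  have hux : u ≠ x := by intro h; rw [h, hxn] at hu; exact lt_irrefl _ hu
  have hndP : ‖p - x‖ ^ 2 ≠ 0 := pow_ne_zero _ (norm_ne_zero_iff.mpr (sub_ne_zero.mpr hpx))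
  have hndU : ‖u - x‖ ^ 2 ≠ 0 := pow_ne_zero _ (norm_ne_zero_iff.mpr (sub_ne_zero.mpr hux))
  set s : ℝ := -(2 * ⟪x - o, u - x⟫) / ‖u - x‖ ^ 2 with hsdef
  set t : ℝ := -(2 * ⟪x - o, p - x⟫) / ‖p - x‖ ^ 2 with htdef
  have hC : chordF o u x = s • (u - x) + x := rfl
  have hB : chordF o p x = t • (p - x) + x := rfl
  have hBs : chordF o p x ∈ sphere o ρ := chordF_sphere hx hpx
  have hCs : chordF o u x ∈ sphere o ρ := chordF_sphere hx hux
  have hBn : ‖chordF o p x - o‖ = ρ := by rw [mem_sphere, dist_eq_norm] at hBs; exact hBs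
  have hCn : ‖chordF o u x - o‖ = ρ := by rw [mem_sphere, dist_eq_norm] at hCs; exact hCs
  have hvB : v ≠ chordF o p x := by intro h; rw [h, hBn] at hv; exact lt_irrefl _ hv
  have hvC : v ≠ chordF o u x := by intro h; rw [h, hCn] at hv; exact lt_irrefl _ hv
  -- coordinate hypotheses
  have hs' : s * ‖u - x‖ ^ 2 = -(2 * ⟪x - o, u - x⟫) := div_mul_cancel₀ _ hndU
  have ht' : t * ‖p - x‖ ^ 2 = -(2 * ⟪x - o, p - x⟫) := div_mul_cancel₀ _ hndP
  have eux : u - x = (u - o) - (x - o) := by abel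
  have epx : p - x = (p - o) - (x - o) := by abel
  have hnormPX : ‖p - x‖ ^ 2
      = ((p - o) 0 - (x - o) 0) ^ 2 + ((p - o) 1 - (x - o) 1) ^ 2 := by
    rw [epx, normsq_coords]; simp [PiLp.sub_apply]
  have hnormUX : ‖u - x‖ ^ 2
      = ((u - o) 0 - (x - o) 0) ^ 2 + ((u - o) 1 - (x - o) 1) ^ 2 := by
    rw [eux, normsq_coords]; simp [PiLp.sub_apply]
  have hinnPX : ⟪x - o, p - x⟫
      = (x - o) 0 * ((p - o) 0 - (x - o) 0) + (x - o) 1 * ((p - o) 1 - (x - o) 1) := by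
    rw [epx, inner_coords]; simp [PiLp.sub_apply]
  have hinnUX : ⟪x - o, u - x⟫
      = (x - o) 0 * ((u - o) 0 - (x - o) 0) + (x - o) 1 * ((u - o) 1 - (x - o) 1) := by
    rw [eux, inner_coords]; simp [PiLp.sub_apply]
  have KP := key_poly ((x - o) 0) ((x - o) 1) ((p - o) 0) ((p - o) 1) ((u - o) 0)
    ((u - o) 1) ((v - o) 0) ((v - o) 1) s t ρ
    (by rw [← normsq_coords, hxn])
    (by rw [← inner_coords]; exact h2)
    (by rw [← inner_coords]; exact h3)
    (by rw [← inner_coords]; exact h4)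
    (by rw [← hnormUX, ← hinnUX]; exact hs')
    (by rw [← hnormPX, ← hinnPX]; exact ht')
    (by rw [← hnormPX]; exact hndP)
    (by rw [← hnormUX]; exact hndU)
  have hdet : (chordF o u x - v) 0 * (chordF o p x - v) 1
      - (chordF o u x - v) 1 * (chordF o p x - v) 0 = 0 := by
    rw [hC, hB]
    simp only [PiLp.sub_apply, PiLp.add_apply, PiLp.smul_apply, smul_eq_mul] at KP ⊢
    linear_combination KP
  -- parallelism and membership in the line through B and v
  obtain ⟨r, hr⟩ := parallel_of_det hdet (sub_ne_zero.mpr (Ne.symm hvB))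
  have hCmem : chordF o u x ∈ affineSpan ℝ ({chordF o p x, v} : Set E2) := by
    have hCB : chordF o u x - chordF o p x = (1 - r) • (v - chordF o p x) := by
      have : chordF o u x - chordF o p x
          = (chordF o u x - v) + (v - chordF o p x) := by abel
      rw [this, hr, sub_smul, one_smul]
      have : (chordF o p x - v) = -(v - chordF o p x) := by abel
      rw [this, smul_neg]
      abel
    have := vadd_left_mem_affineSpan_pair.mpr
      ⟨1 - r, (by rw [vsub_eq_sub]; exact hCB.symm :
        (1 - r) • (v -ᵥ chordF o p x) = chordF o u x - chordF o p x)⟩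
    simpa [vadd_eq_add] using this
  rcases chordF_unique hBs hCs hvB hCmem with h | h
  · -- tangent case: C = B; show chordF o v B = B
    have hsum : s • (u - x) = t • (p - x) := by
      have := h
      rw [hC, hB] at this
      have h' : s • (u - x) + x = t • (p - x) + x := this
      have := congrArg (fun w => w - x) h'
      simpa using this
    have ht0 : t ≠ 0 := by
      intro h0
      have hip : ⟪x - o, p - x⟫ ≠ 0 := by
        have hcs : ⟪x - o, p - o⟫ ≤ ‖x - o‖ * ‖p - o‖ := real_inner_le_norm _ _
        rw [hxn] at hcs
        have hexp : ⟪x - o, p - x⟫ = ⟪x - o, p - o⟫ - ρ ^ 2 := by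
          rw [epx, inner_sub_right, real_inner_self_eq_norm_sq, hxn]
        rw [hexp]
        have hρ0 : 0 < ρ := lt_of_le_of_lt (norm_nonneg _) hp
        have hmul : ρ * ‖p - o‖ < ρ * ρ := by
          exact mul_lt_mul_of_pos_left hp hρ0
        have hρsq : ρ ^ 2 = ρ * ρ := sq ρ
        intro hc
        rw [sub_eq_zero] at hc
        rw [hc] at hcs
        linarith
      rw [htdef, div_eq_zero_iff] at h0
      rcases h0 with h0 | h0
      · exact hip (by linarith [h0])
      · exact hndP h0
    have hst : s ≠ t := by
      intro hst
      rw [hst] at hsum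
      have : u - x = p - x := smul_right_injective _ ht0 hsum
      have hup : u = p := by
        have := congrArg (fun w => w + x) this
        simpa using this
      rw [hup] at hu
      exact lt_irrefl _ (lt_trans hu hp)
    have eu1 : ⟪u - x, v - o⟫ = ρ ^ 2 - ⟪x - o, v - o⟫ := by
      rw [eux, inner_sub_left, h4]
    have ep1 : ⟪p - x, v - o⟫ = ρ ^ 2 - ⟪x - o, v - o⟫ := by
      rw [epx, inner_sub_left, h3]
    have hiv : s * ⟪u - x, v - o⟫ = t * ⟪p - x, v - o⟫ := by
      have := congrArg (fun w => ⟪w, v - o⟫) hsum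
      simpa only [real_inner_smul_left] using this
    rw [eu1, ep1] at hiv
    have hxv : ⟪x - o, v - o⟫ = ρ ^ 2 := by
      have hz : (s - t) * (ρ ^ 2 - ⟪x - o, v - o⟫) = 0 := by linear_combination hiv
      rcases mul_eq_zero.mp hz with hz | hz
      · exact absurd (sub_eq_zero.mp hz) hst
      · linarith [sub_eq_zero.mp hz]
    have hBv : ⟪chordF o p x - o, v - chordF o p x⟫ = 0 := by
      have e1 : ⟪chordF o p x - o, v - o⟫ = ρ ^ 2 := by
        rw [hB]
        have hre : t • (p - x) + x - o = t • (p - x) + (x - o) := by abel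
        rw [hre, inner_add_left, real_inner_smul_left, ep1, hxv]
        ring
      have : v - chordF o p x = (v - o) - (chordF o p x - o) := by abel
      rw [this, inner_sub_right, e1, real_inner_self_eq_norm_sq, hBn]
      ring
    rw [chordF_tangent hBv, h]
  · exact h.symm

/-- If `p₁, …, pₙ` (n ≥ 3, indices cyclic) are points inside the circle forming a
right-angled polygon in the Cayley–Klein model — i.e. each side-line `Lᵢ` through
`pᵢ, p_{i+1}` misses the center, has a pole `uᵢ` with respect to the circle
(`Lᵢ = {x : ⟪x − o, uᵢ − o⟫ = ρ²}`), and the next side-line `L_{i+1}` passes through `uᵢ` —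
then `I_{pₙ} ∘ ⋯ ∘ I_{p₁}` is the identity map of the circle. -/
theorem castillon_right_angled_polygon
    (o : E2) (ρ : ℝ) (hρ : 0 < ρ)
    (n : ℕ) [NeZero n] (hn : 3 ≤ n)
    (p : Fin n → E2)
    -- the vertices lie strictly inside the circle
    (hpin : ∀ i, dist (p i) o < ρ)
    -- consecutive vertices are distinct
    (hpne : ∀ i : Fin n, p i ≠ p (i + 1))
    -- no side-line passes through the center
    (hno : ∀ i : Fin n, o ∉ affineSpan ℝ ({p i, p (i + 1)} : Set E2))
    -- `u i` is the pole of the side-line `Lᵢ` with respect to the circle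
    (u : Fin n → E2)
    (hpole : ∀ i : Fin n,
      (affineSpan ℝ ({p i, p (i + 1)} : Set E2) : Set E2) =
        {x : E2 | (inner ℝ (x - o) (u i - o) : ℝ) = ρ ^ 2})
    -- each side-line passes through the pole of the previous one (right angles)
    (hperp : ∀ i : Fin n, u i ∈ affineSpan ℝ ({p (i + 1), p (i + 1 + 1)} : Set E2))
    (I : Fin n → E2 → E2) (hI : ∀ i, ChordMap o ρ (p i) (I i)) :
    ∀ y ∈ sphere o ρ, chain (List.ofFn I) y = y := by
  have hpin' : ∀ i, ‖p i - o‖ < ρ := fun i => by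
    have := hpin i; rwa [dist_eq_norm] at this
  have mem_line : ∀ (i : Fin n) (z : E2),
      z ∈ affineSpan ℝ ({p i, p (i + 1)} : Set E2) → ⟪z - o, u i - o⟫ = ρ ^ 2 := by
    intro i z hz
    have hz' : z ∈ (affineSpan ℝ ({p i, p (i + 1)} : Set E2) : Set E2) := hz
    rw [hpole i] at hz'
    exact hz'
  have h2 : ∀ i : Fin n, ⟪p (i + 1) - o, u i - o⟫ = ρ ^ 2 := fun i =>
    mem_line i _ (right_mem_affineSpan_pair ℝ _ _)
  have h3 : ∀ i : Fin n, ⟪p i - o, u i - o⟫ = ρ ^ 2 := fun i =>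
    mem_line i _ (left_mem_affineSpan_pair ℝ _ _)
  have h4 : ∀ i : Fin n, ⟪u i - o, u (i + 1) - o⟫ = ρ ^ 2 := fun i =>
    mem_line (i + 1) _ (hperp i)
  have hu_out : ∀ i : Fin n, ρ < ‖u i - o‖ := by
    intro i
    have hcs : ⟪p (i + 1) - o, u i - o⟫ ≤ ‖p (i + 1) - o‖ * ‖u i - o‖ :=
      real_inner_le_norm _ _
    rw [h2 i] at hcs
    have h1 := hpin' (i + 1)
    by_contra hle
    push_neg at hle
    have e1 : ‖p (i + 1) - o‖ * ‖u i - o‖ ≤ ‖p (i + 1) - o‖ * ρ :=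
      mul_le_mul_of_nonneg_left hle (norm_nonneg _)
    have e2 : ‖p (i + 1) - o‖ * ρ < ρ * ρ := mul_lt_mul_of_pos_right h1 hρ
    nlinarith
  have hune : ∀ (i : Fin n) (z : E2), z ∈ sphere o ρ → u i ≠ z := by
    intro i z hz hc
    rw [mem_sphere, dist_eq_norm] at hz
    have := hu_out i
    rw [hc, hz] at this
    exact lt_irrefl _ this
  have gs : ∀ (i : Fin n) (z : E2), z ∈ sphere o ρ → chordF o (u i) z ∈ sphere o ρ :=
    fun i z hz => chordF_sphere hz (hune i z hz)
  have ginv : ∀ (i : Fin n) (z : E2), z ∈ sphere o ρ →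
      chordF o (u i) (chordF o (u i) z) = z :=
    fun i z hz => chordF_invol hz (ne_of_gt (hu_out i))
  have step : ∀ (i : Fin n) (z : E2), z ∈ sphere o ρ →
      I (i + 1) z = chordF o (u (i + 1)) (chordF o (u i) z) := by
    intro i z hz
    have e1 : I (i + 1) z = chordF o (p (i + 1)) z :=
      chordMap_eq (hI (i + 1)) (ne_of_lt (hpin' (i + 1))) hz
    have e2 : chordF o (u (i + 1)) (chordF o (p (i + 1)) z) = chordF o (u i) z :=
      key_step hz (hpin' (i + 1)) (hu_out i) (hu_out (i + 1)) (h2 i) (h3 (i + 1)) (h4 i)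
    have hpz : p (i + 1) ≠ z := by
      intro hc
      have := hpin' (i + 1)
      rw [mem_sphere, dist_eq_norm] at hz
      rw [hc, hz] at this
      exact lt_irrefl _ this
    have hzP : chordF o (p (i + 1)) z ∈ sphere o ρ := chordF_sphere hz hpz
    have e3 := chordF_invol hzP (ne_of_gt (hu_out (i + 1)))
    rw [e1, ← e3, e2]
  have step' : ∀ (j : Fin n) (z : E2), z ∈ sphere o ρ →
      I j z = chordF o (u j) (chordF o (u (j - 1)) z) := by
    intro j z hz
    have := step (j - 1) z hz
    rwa [sub_add_cancel] at this
  intro y hy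
  have chain_append : ∀ (l : List (E2 → E2)) (f : E2 → E2) (z : E2),
      chain (l ++ [f]) z = f (chain l z) := by
    intro l f z; simp [chain, List.foldl_append]
  set m1 : Fin n := 0 - 1 with hm1
  have gy : chordF o (u m1) y ∈ sphere o ρ := gs m1 y hy
  have hone : (1 : Fin n).val = 1 := by
    rw [Fin.val_one']; exact Nat.mod_eq_of_lt (by omega)
  have main : ∀ k : ℕ, ∀ hk : k < n,
      chain ((List.ofFn I).take (k + 1)) y
        = chordF o (u ⟨k, hk⟩) (chordF o (u m1) y) := by
    intro k
    induction k with
    | zero =>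
      intro hk
      have hget : (List.ofFn I)[0]? = some (I ⟨0, hk⟩) := by
        simp [List.getElem?_ofFn, hk]
      rw [List.take_succ, hget]
      have : chain ((List.ofFn I).take 0 ++ (some (I ⟨0, hk⟩)).toList) y = I ⟨0, hk⟩ y := by
        simp [chain]
      rw [this]
      have hz0 : (⟨0, hk⟩ : Fin n) = 0 := by
        ext; simp
      rw [hz0]
      have := step' 0 y hy
      rwa [show (0 : Fin n) - 1 = m1 from hm1.symm] at this
    | succ k ih =>
      intro hk
      have hk' : k < n := Nat.lt_of_succ_lt hk
      have hget : (List.ofFn I)[k + 1]? = some (I ⟨k + 1, hk⟩) := by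
        simp [List.getElem?_ofFn, hk]
      rw [List.take_succ, hget]
      have : (some (I ⟨k + 1, hk⟩)).toList = [I ⟨k + 1, hk⟩] := rfl
      rw [this, chain_append, ih hk']
      have hmem : chordF o (u ⟨k, hk'⟩) (chordF o (u m1) y) ∈ sphere o ρ :=
        gs _ _ gy
      rw [step' ⟨k + 1, hk⟩ _ hmem]
      have hsub : (⟨k + 1, hk⟩ : Fin n) - 1 = ⟨k, hk'⟩ := by
        apply Fin.ext
        rw [Fin.sub_def]
        show (n - (1 : Fin n).val + (k + 1)) % n = k
        rw [hone, show n - 1 + (k + 1) = n + k from by omega, Nat.add_mod_left]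
        exact Nat.mod_eq_of_lt hk'
      rw [hsub, ginv ⟨k, hk'⟩ _ gy]
  have hnn : n - 1 < n := by omega
  have hfin := main (n - 1) hnn
  rw [show n - 1 + 1 = n from by omega] at hfin
  rw [List.take_of_length_le (by rw [List.length_ofFn])] at hfin
  rw [hfin]
  have hm1v : m1.val = n - 1 := by
    rw [hm1, Fin.sub_def]
    show (n - (1 : Fin n).val + (0 : Fin n).val) % n = n - 1
    rw [hone, Fin.val_zero, Nat.add_zero]
    exact Nat.mod_eq_of_lt (by omega)
  have hlast : (⟨n - 1, hnn⟩ : Fin n) = m1 := Fin.ext hm1v.symm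
  rw [hlast]
  exact ginv m1 y hy
end

section
/- Work in E₃ = EuclideanSpace ℝ (Fin 3) and let S be the sphere Metric.sphere o ρ with ρ > 0. Let n be even and let p₁, …, pₙ be points of E₃ not on S. If the composition I_{pₙ} ∘ ⋯ ∘ I_{p₁} : S → S has three pairwise distinct fixed points on S, then it is the identity map of S. (If Castillon's problem for the sphere and an even number of points has at least three solutions, then every starting point on the sphere gives a solution.) -/
open Metric

/-- Three-dimensional Euclidean space. -/
abbrev E3 : Type := EuclideanSpace ℝ (Fin 3)

/-- `I` restricts on the sphere `sphere o ρ` to the chord map through `p`: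
for every `x` on the sphere, `I x` is the point of the sphere on the line through `x` and `p`
such that every point of the sphere on that line equals `x` or `I x`. -/
def ChordMap3 (o : E3) (ρ : ℝ) (p : E3) (I : E3 → E3) : Prop :=
  ∀ x ∈ sphere o ρ, I x ∈ sphere o ρ ∧
    I x ∈ affineSpan ℝ ({x, p} : Set E3) ∧
    ∀ z ∈ sphere o ρ, z ∈ affineSpan ℝ ({x, p} : Set E3) → z = x ∨ z = I x

/-- Apply a list of maps in order: `chain [f₁, …, fₙ] x = fₙ (⋯ (f₁ x) ⋯)`,
i.e. the composition `fₙ ∘ ⋯ ∘ f₁` applied to `x`. -/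
def chain3 (I : List (E3 → E3)) (x : E3) : E3 :=
  I.foldl (fun y f => f y) x

namespace CastAux


/-- Minkowski bilinear form on ℝ⁴. -/
def MB (u w : Fin 4 → ℝ) : ℝ := u 0 * w 0 - u 1 * w 1 - u 2 * w 2 - u 3 * w 3

/-- Lift of a point of `E3` to the Minkowski space. -/
def lift (o : E3) (ρ : ℝ) (x : E3) : Fin 4 → ℝ := ![ρ, x 0 - o 0, x 1 - o 1, x 2 - o 2]

@[simp] lemma lift_zero (o : E3) (ρ : ℝ) (x : E3) : lift o ρ x 0 = ρ := rfl
@[simp] lemma lift_one (o : E3) (ρ : ℝ) (x : E3) : lift o ρ x 1 = x 0 - o 0 := rfl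
@[simp] lemma lift_two (o : E3) (ρ : ℝ) (x : E3) : lift o ρ x 2 = x 1 - o 1 := rfl
@[simp] lemma lift_three (o : E3) (ρ : ℝ) (x : E3) : lift o ρ x 3 = x 2 - o 2 := rfl

lemma lift_inj (o : E3) (ρ : ℝ) {x y : E3} (h : lift o ρ x = lift o ρ y) : x = y := by
  ext i
  fin_cases i
  · have := congrFun h 1; simpa using this
  · have := congrFun h 2; simpa using this
  · have := congrFun h 3; simpa using this

lemma mem_sphere_iff (o : E3) {ρ : ℝ} (hρ : 0 ≤ ρ) (x : E3) :
    x ∈ sphere o ρ ↔ (x 0 - o 0)^2 + (x 1 - o 1)^2 + (x 2 - o 2)^2 = ρ^2 := by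
  have hd : dist x o = Real.sqrt ((x 0 - o 0)^2 + (x 1 - o 1)^2 + (x 2 - o 2)^2) := by
    rw [EuclideanSpace.dist_eq, Fin.sum_univ_three]; simp [Real.dist_eq, sq_abs]
  rw [mem_sphere, hd]
  constructor
  · intro h
    rw [← h, Real.sq_sqrt (by positivity)]
  · intro h
    rw [h, Real.sqrt_sq hρ]

lemma mem_sphere_iff_MB (o : E3) {ρ : ℝ} (hρ : 0 ≤ ρ) (x : E3) :
    x ∈ sphere o ρ ↔ MB (lift o ρ x) (lift o ρ x) = 0 := by
  rw [mem_sphere_iff o hρ]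
  simp only [MB, lift_zero, lift_one, lift_two, lift_three]
  constructor <;> intro h <;> nlinarith [h]

lemma mem_line_iff (x p z : E3) :
    z ∈ affineSpan ℝ ({x, p} : Set E3) ↔ ∃ r : ℝ, z = x + r • (p - x) := by
  constructor
  · intro h
    have h' : (z - x) +ᵥ x ∈ line[ℝ, x, p] := by simpa [vadd_eq_add, sub_add_cancel] using h
    obtain ⟨r, hr⟩ := (vadd_left_mem_affineSpan_pair (k := ℝ) (v := z - x) (p₁ := x) (p₂ := p)).1 h'
    exact ⟨r, by rw [show p -ᵥ x = p - x from rfl] at hr; rw [hr]; abel⟩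
  · rintro ⟨r, rfl⟩
    have := smul_vsub_vadd_mem_affineSpan_pair (k := ℝ) r x p
    simpa [vadd_eq_add, add_comm] using this

lemma lift_line (o : E3) (ρ : ℝ) (x p : E3) (r : ℝ) :
    lift o ρ (x + r • (p - x)) = lift o ρ x + r • (lift o ρ p - lift o ρ x) := by
  funext i
  fin_cases i <;>
    simp [lift, PiLp.add_apply, PiLp.smul_apply, PiLp.sub_apply, smul_eq_mul] <;> ring


def ee (j : Fin 4) : ℝ := if j = 0 then 1 else -1

noncomputable def Rm (q : Fin 4 → ℝ) : Matrix (Fin 4) (Fin 4) ℝ :=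
  Matrix.of fun i j => (2 * q i / MB q q) * (ee j * q j) - if i = j then 1 else 0

lemma Rm_mulVec (q u : Fin 4 → ℝ) :
    (Rm q).mulVec u = fun i => 2 * MB u q / MB q q * q i - u i := by
  funext i
  simp only [Rm, Matrix.mulVec, dotProduct, Fin.sum_univ_four, Matrix.of_apply, MB, ee]
  fin_cases i <;> simp (config := { decide := true }) <;> ring

lemma Rm_preserves (q : Fin 4 → ℝ) (hq : MB q q ≠ 0) (u w : Fin 4 → ℝ) :
    MB ((Rm q).mulVec u) ((Rm q).mulVec w) = MB u w := by
  simp only [Rm_mulVec, MB] at *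
  have hq' : q 0 ^ 2 - q 1 ^ 2 - q 2 ^ 2 - q 3 ^ 2 ≠ 0 := by simpa only [sq] using hq
  field_simp
  ring

set_option maxHeartbeats 1000000 in
lemma det_fin_four (M : Matrix (Fin 4) (Fin 4) ℝ) :
    M.det =
      M 0 0 * (M 1 1 * (M 2 2 * M 3 3 - M 2 3 * M 3 2) - M 1 2 * (M 2 1 * M 3 3 - M 2 3 * M 3 1) + M 1 3 * (M 2 1 * M 3 2 - M 2 2 * M 3 1))
    - M 0 1 * (M 1 0 * (M 2 2 * M 3 3 - M 2 3 * M 3 2) - M 1 2 * (M 2 0 * M 3 3 - M 2 3 * M 3 0) + M 1 3 * (M 2 0 * M 3 2 - M 2 2 * M 3 0))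
    + M 0 2 * (M 1 0 * (M 2 1 * M 3 3 - M 2 3 * M 3 1) - M 1 1 * (M 2 0 * M 3 3 - M 2 3 * M 3 0) + M 1 3 * (M 2 0 * M 3 1 - M 2 1 * M 3 0))
    - M 0 3 * (M 1 0 * (M 2 1 * M 3 2 - M 2 2 * M 3 1) - M 1 1 * (M 2 0 * M 3 2 - M 2 2 * M 3 0) + M 1 2 * (M 2 0 * M 3 1 - M 2 1 * M 3 0)) := by
  rw [Matrix.det_succ_row_zero]
  simp (config := { decide := true }) [Fin.sum_univ_four, Matrix.det_fin_three, Fin.succAbove,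
    Matrix.submatrix_apply, show (Fin.succ 2 : Fin 4) = 3 from rfl, show (Fin.castSucc 2 : Fin 4) = 2 from rfl,
    show (Fin.castSucc 1 : Fin 4) = 1 from rfl, show (Fin.succ 1 : Fin 4) = 2 from rfl,
    show (Fin.castSucc 0 : Fin 4) = 0 from rfl, show (Fin.succ 0 : Fin 4) = 1 from rfl]
  ring

lemma det_rank_one_sub (a b : Fin 4 → ℝ) :
    (Matrix.of fun i j => a i * b j - if i = j then 1 else 0).det =
      1 - (a 0 * b 0 + a 1 * b 1 + a 2 * b 2 + a 3 * b 3) := by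
  rw [det_fin_four]
  simp (config := { decide := true }) only [Matrix.of_apply]
  norm_num
  ring

lemma Rm_det (q : Fin 4 → ℝ) (hq : MB q q ≠ 0) : (Rm q).det = -1 := by
  rw [Rm, det_rank_one_sub (fun i => 2 * q i / MB q q) (fun j => ee j * q j)]
  have e0 : ee 0 = 1 := rfl
  have e1 : ee 1 = -1 := rfl
  have e2 : ee 2 = -1 := rfl
  have e3 : ee 3 = -1 := rfl
  simp only [e0, e1, e2, e3, MB] at *
  have hq' : q 0 ^ 2 - q 1 ^ 2 - q 2 ^ 2 - q 3 ^ 2 ≠ 0 := by simpa only [sq] using hq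
  field_simp
  ring

section Step
variable {o : E3} {ρ : ℝ} {p : E3} {I : E3 → E3} {x : E3}

lemma null_zero_coord {v : Fin 4 → ℝ} (hnull : MB v v = 0) (h0 : v 0 = 0) : v = 0 := by
  simp only [MB, h0] at hnull
  have h1 : v 1 ^ 2 = 0 := by nlinarith [sq_nonneg (v 1), sq_nonneg (v 2), sq_nonneg (v 3)]
  have h2 : v 2 ^ 2 = 0 := by nlinarith [sq_nonneg (v 1), sq_nonneg (v 2), sq_nonneg (v 3)]
  have h3 : v 3 ^ 2 = 0 := by nlinarith [sq_nonneg (v 1), sq_nonneg (v 2), sq_nonneg (v 3)]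
  have e1 := pow_eq_zero_iff (two_ne_zero) |>.1 h1
  have e2 := pow_eq_zero_iff (two_ne_zero) |>.1 h2
  have e3 := pow_eq_zero_iff (two_ne_zero) |>.1 h3
  funext i
  fin_cases i
  exacts [h0, e1, e2, e3]

/-- In the tangent case every point of the sphere on the line equals `x`. -/
lemma tangent_unique (hρ : 0 < ρ) (hp : p ∉ sphere o ρ) (hx : x ∈ sphere o ρ)
    (htang : MB (lift o ρ x) (lift o ρ p) = 0) :
    ∀ z ∈ sphere o ρ, z ∈ affineSpan ℝ ({x, p} : Set E3) → z = x := by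
  intro z hz hzl
  obtain ⟨r, rfl⟩ := (mem_line_iff x p z).1 hzl
  have hQ : MB (lift o ρ p) (lift o ρ p) ≠ 0 := fun h => hp ((mem_sphere_iff_MB o hρ.le p).2 h)
  have hxn : MB (lift o ρ x) (lift o ρ x) = 0 := (mem_sphere_iff_MB o hρ.le x).1 hx
  have hzn : MB (lift o ρ (x + r • (p - x))) (lift o ρ (x + r • (p - x))) = 0 :=
    (mem_sphere_iff_MB o hρ.le _).1 hz
  rw [lift_line] at hzn
  have key : r ^ 2 * MB (lift o ρ p) (lift o ρ p) = 0 := by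
    simp only [MB, Pi.add_apply, Pi.smul_apply, Pi.sub_apply, smul_eq_mul] at hzn hxn htang ⊢
    linear_combination hzn - (1 - r) ^ 2 * hxn - 2 * r * (1 - r) * htang
  have hr : r = 0 := by
    rcases mul_eq_zero.1 key with h | h
    · exact pow_eq_zero_iff (by norm_num) |>.1 h
    · exact absurd h hQ
  rw [hr]; simp

lemma step (hρ : 0 < ρ) (hp : p ∉ sphere o ρ) (hCM : ChordMap3 o ρ p I) (hx : x ∈ sphere o ρ) :
    ∃ c : ℝ, c ≠ 0 ∧ (Rm (lift o ρ p)).mulVec (lift o ρ x) = c • lift o ρ (I x) := by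
  obtain ⟨hIS, hIl, huniq⟩ := hCM x hx
  have hQ : MB (lift o ρ p) (lift o ρ p) ≠ 0 := fun h => hp ((mem_sphere_iff_MB o hρ.le p).2 h)
  have hxn : MB (lift o ρ x) (lift o ρ x) = 0 := (mem_sphere_iff_MB o hρ.le x).1 hx
  by_cases hBx : MB (lift o ρ x) (lift o ρ p) = 0
  · -- tangent case : I x = x
    have hIx : I x = x := tangent_unique hρ hp hx hBx (I x) hIS hIl
    refine ⟨-1, by norm_num, ?_⟩
    rw [Rm_mulVec, hIx]
    funext i
    simp only [Pi.smul_apply, smul_eq_mul, hBx]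
    ring
  · obtain ⟨s, hs_def⟩ : ∃ s : ℝ, s = 2 * MB (lift o ρ x) (lift o ρ p) /
        MB (lift o ρ p) (lift o ρ p) := ⟨_, rfl⟩
    have hRv : (Rm (lift o ρ p)).mulVec (lift o ρ x) =
        fun i => s * lift o ρ p i - lift o ρ x i := by
      rw [Rm_mulVec]
      funext i
      rw [hs_def]
    have hs : s ≠ 0 := by
      rw [hs_def]
      exact div_ne_zero (mul_ne_zero two_ne_zero hBx) hQ
    obtain ⟨t, ht_def⟩ : ∃ t : ℝ, t = (s - 1) * ρ := ⟨_, rfl⟩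
    have hRnull : MB ((Rm (lift o ρ p)).mulVec (lift o ρ x))
        ((Rm (lift o ρ p)).mulVec (lift o ρ x)) = 0 := by
      rw [Rm_preserves _ hQ]; exact hxn
    have hRv0 : (Rm (lift o ρ p)).mulVec (lift o ρ x) 0 = t := by
      rw [hRv, ht_def]; simp; ring
    have ht : t ≠ 0 := by
      intro ht0
      have hz : (Rm (lift o ρ p)).mulVec (lift o ρ x) = 0 :=
        null_zero_coord hRnull (by rw [hRv0, ht0])
      have hvq : ∀ i, lift o ρ x i = s * lift o ρ p i := by
        intro i
        have h := congrFun hz i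
        rw [hRv] at h
        simp only [Pi.zero_apply] at h
        linarith [h]
      have hkey : MB (lift o ρ x) (lift o ρ x) = s ^ 2 * MB (lift o ρ p) (lift o ρ p) := by
        simp only [MB, hvq 0, hvq 1, hvq 2, hvq 3]; ring
      rw [hxn] at hkey
      rcases mul_eq_zero.1 hkey.symm with h | h
      · exact hs (pow_eq_zero_iff (by norm_num) |>.1 h)
      · exact hQ h
    -- the second intersection point
    have hyl : x + (ρ * s / t) • (p - x) ∈ affineSpan ℝ ({x, p} : Set E3) :=
      (mem_line_iff x p _).2 ⟨ρ * s / t, rfl⟩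
    have hlifty : lift o ρ (x + (ρ * s / t) • (p - x)) =
        (ρ / t) • (Rm (lift o ρ p)).mulVec (lift o ρ x) := by
      rw [lift_line, hRv]
      funext j
      simp only [Pi.add_apply, Pi.smul_apply, Pi.sub_apply, smul_eq_mul]
      rw [ht_def] at ht ⊢
      have hs1 : s - 1 ≠ 0 := left_ne_zero_of_mul ht
      field_simp
      ring
    have hyS : x + (ρ * s / t) • (p - x) ∈ sphere o ρ := by
      rw [mem_sphere_iff_MB o hρ.le, hlifty]
      simp only [MB, Pi.smul_apply, smul_eq_mul]
      simp only [MB] at hRnull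
      linear_combination (ρ / t) ^ 2 * hRnull
    have hyx : x + (ρ * s / t) • (p - x) ≠ x := by
      intro hxy
      have hl : lift o ρ x = (ρ / t) • (Rm (lift o ρ p)).mulVec (lift o ρ x) := by
        rw [← hlifty, hxy]
      have hqvx : lift o ρ p = lift o ρ x := by
        funext j
        have hj := congrFun hl j
        rw [hRv] at hj
        simp only [Pi.smul_apply, smul_eq_mul] at hj
        have hj' : lift o ρ x j * t = ρ / t * (s * lift o ρ p j - lift o ρ x j) * t := by
          rw [← hj]
        rw [div_mul_eq_mul_div, div_mul_cancel₀ _ ht] at hj'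
        have h2 : s * ρ * lift o ρ p j = s * ρ * lift o ρ x j := by
          linear_combination (-1 : ℝ) * hj' + lift o ρ x j * ht_def
        exact (mul_left_cancel₀ (mul_ne_zero hs (ne_of_gt hρ)) h2)
      apply hQ
      rw [hqvx, hxn]
    rcases huniq _ hyS hyl with h | h
    · exact absurd h hyx
    · refine ⟨t / ρ, div_ne_zero ht (ne_of_gt hρ), ?_⟩
      rw [← h, hlifty, smul_smul]
      have : t / ρ * (ρ / t) = 1 := by field_simp
      rw [this, one_smul]
end Step

@[simp] lemma ee0 : ee 0 = 1 := rfl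
@[simp] lemma ee1 : ee 1 = -1 := rfl
@[simp] lemma ee2 : ee 2 = -1 := rfl
@[simp] lemma ee3 : ee 3 = -1 := rfl
lemma MB_comm (u w : Fin 4 → ℝ) : MB u w = MB w u := by simp only [MB]; ring
lemma MB_zero_left (w : Fin 4 → ℝ) : MB 0 w = 0 := by simp [MB]
lemma MB_smul_right (a : ℝ) (u w : Fin 4 → ℝ) : MB u (a • w) = a * MB u w := by
  simp only [MB, Pi.smul_apply, smul_eq_mul]; ring
lemma MB_smul_smul (a b : ℝ) (u w : Fin 4 → ℝ) : MB (a • u) (b • w) = a * b * MB u w := by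
  simp only [MB, Pi.smul_apply, smul_eq_mul]; ring
lemma MB_comb (a b c d : ℝ) (u1 u2 u3 u4 w : Fin 4 → ℝ) :
    MB (a • u1 + b • u2 + c • u3 + d • u4) w =
      a * MB u1 w + b * MB u2 w + c * MB u3 w + d * MB u4 w := by
  simp only [MB, Pi.add_apply, Pi.smul_apply, smul_eq_mul]; ring
lemma MB_comb_right (a b c d : ℝ) (u1 u2 u3 u4 w : Fin 4 → ℝ) :
    MB w (a • u1 + b • u2 + c • u3 + d • u4) =
      a * MB w u1 + b * MB w u2 + c * MB w u3 + d * MB w u4 := by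
  simp only [MB, Pi.add_apply, Pi.smul_apply, smul_eq_mul]; ring

lemma MB_sphere_ne {o : E3} {ρ : ℝ} (hρ : 0 < ρ) {x y : E3} (hx : x ∈ sphere o ρ)
    (hy : y ∈ sphere o ρ) (hxy : x ≠ y) : MB (lift o ρ x) (lift o ρ y) ≠ 0 := by
  have hx' := (mem_sphere_iff o hρ.le x).1 hx
  have hy' := (mem_sphere_iff o hρ.le y).1 hy
  intro h0
  simp only [MB, lift_zero, lift_one, lift_two, lift_three] at h0
  have hsum : (x 0 - y 0)^2 + (x 1 - y 1)^2 + (x 2 - y 2)^2 = 0 := by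
    linear_combination hx' + hy' + 2 * h0
  apply hxy
  have e0 : (x 0 - y 0)^2 = 0 := by nlinarith [sq_nonneg (x 0 - y 0), sq_nonneg (x 1 - y 1), sq_nonneg (x 2 - y 2)]
  have e1 : (x 1 - y 1)^2 = 0 := by nlinarith [sq_nonneg (x 0 - y 0), sq_nonneg (x 1 - y 1), sq_nonneg (x 2 - y 2)]
  have e2 : (x 2 - y 2)^2 = 0 := by nlinarith [sq_nonneg (x 0 - y 0), sq_nonneg (x 1 - y 1), sq_nonneg (x 2 - y 2)]
  ext i
  fin_cases i
  exacts [sub_eq_zero.1 (pow_eq_zero_iff two_ne_zero |>.1 e0),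
    sub_eq_zero.1 (pow_eq_zero_iff two_ne_zero |>.1 e1),
    sub_eq_zero.1 (pow_eq_zero_iff two_ne_zero |>.1 e2)]

lemma lift_nonnull {o : E3} {ρ : ℝ} (hρ : 0 ≤ ρ) {p : E3} (hp : p ∉ sphere o ρ) :
    MB (lift o ρ p) (lift o ρ p) ≠ 0 := fun h => hp ((mem_sphere_iff_MB o hρ p).2 h)

/- ## products of the chord matrices -/
noncomputable def Mprod (o : E3) (ρ : ℝ) : List (E3 × (E3 → E3)) → Matrix (Fin 4) (Fin 4) ℝ
  | [] => 1
  | a :: l => Mprod o ρ l * Rm (lift o ρ a.1)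

lemma chain_key {o : E3} {ρ : ℝ} (hρ : 0 < ρ) : ∀ (l : List (E3 × (E3 → E3))),
    (∀ a ∈ l, a.1 ∉ sphere o ρ ∧ ChordMap3 o ρ a.1 a.2) → ∀ x ∈ sphere o ρ,
    chain3 (l.map Prod.snd) x ∈ sphere o ρ ∧
    ∃ c : ℝ, c ≠ 0 ∧
      (Mprod o ρ l).mulVec (lift o ρ x) = c • lift o ρ (chain3 (l.map Prod.snd) x)
  | [] => fun _ x hx => ⟨hx, 1, one_ne_zero, by simp [Mprod, chain3, Matrix.one_mulVec]⟩
  | a :: l => by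
    intro hl x hx
    obtain ⟨hpa, hCMa⟩ := hl a (List.mem_cons_self)
    have hfx : a.2 x ∈ sphere o ρ := (hCMa x hx).1
    obtain ⟨c₁, hc₁, hstep⟩ := step hρ hpa hCMa hx
    obtain ⟨hS, c₂, hc₂, hrec2⟩ :=
      chain_key hρ l (fun b hb => hl b (List.mem_cons_of_mem a hb)) (a.2 x) hfx
    have hch : chain3 ((a :: l).map Prod.snd) x = chain3 (l.map Prod.snd) (a.2 x) := rfl
    refine ⟨by rw [hch]; exact hS, c₂ * c₁, mul_ne_zero hc₂ hc₁, ?_⟩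
    rw [hch]
    show (Mprod o ρ l * Rm (lift o ρ a.1)).mulVec (lift o ρ x) = _
    rw [← Matrix.mulVec_mulVec, hstep, Matrix.mulVec_smul, hrec2, smul_smul, mul_comm c₁ c₂]

lemma Mprod_preserves {o : E3} {ρ : ℝ} (hρ : 0 < ρ) : ∀ (l : List (E3 × (E3 → E3))),
    (∀ a ∈ l, a.1 ∉ sphere o ρ) → ∀ u w,
    MB ((Mprod o ρ l).mulVec u) ((Mprod o ρ l).mulVec w) = MB u w
  | [] => by intro _ u w; simp [Mprod, Matrix.one_mulVec]
  | a :: l => by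
    intro hl u w
    show MB ((Mprod o ρ l * Rm (lift o ρ a.1)).mulVec u) ((Mprod o ρ l * Rm (lift o ρ a.1)).mulVec w) = _
    rw [← Matrix.mulVec_mulVec, ← Matrix.mulVec_mulVec,
      Mprod_preserves hρ l (fun b hb => hl b (List.mem_cons_of_mem a hb))]
    exact Rm_preserves _ (lift_nonnull hρ.le (hl a (List.mem_cons_self))) u w

lemma Mprod_det {o : E3} {ρ : ℝ} (hρ : 0 < ρ) : ∀ (l : List (E3 × (E3 → E3))),
    (∀ a ∈ l, a.1 ∉ sphere o ρ) → (Mprod o ρ l).det = (-1 : ℝ) ^ l.length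
  | [] => by intro _; simp [Mprod]
  | a :: l => by
    intro hl
    show (Mprod o ρ l * Rm (lift o ρ a.1)).det = _
    rw [Matrix.det_mul, Mprod_det hρ l (fun b hb => hl b (List.mem_cons_of_mem a hb)),
      Rm_det _ (lift_nonnull hρ.le (hl a (List.mem_cons_self)))]
    simp [pow_succ]

/- ## solving the small linear system -/
lemma solve3 {b12 b13 b23 a b c : ℝ} (h12 : b12 ≠ 0) (h13 : b13 ≠ 0) (h23 : b23 ≠ 0)
    (e1 : b * b12 + c * b13 = 0) (e2 : a * b12 + c * b23 = 0) (e3 : a * b13 + b * b23 = 0) :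
    a = 0 ∧ b = 0 ∧ c = 0 := by
  have key : b23 * (c * b13 - b * b12) = 0 := by linear_combination b13 * e2 - b12 * e3
  have key2 : c * b13 - b * b12 = 0 := by
    rcases mul_eq_zero.1 key with h | h
    · exact absurd h h23
    · exact h
  have hb : b * b12 = 0 := by linarith
  have hbz : b = 0 := by rcases mul_eq_zero.1 hb with h | h; exacts [h, absurd h h12]
  have hcz : c = 0 := by
    have : c * b13 = 0 := by rw [hbz] at key2; linarith
    rcases mul_eq_zero.1 this with h | h; exacts [h, absurd h h13]
  have haz : a = 0 := by
    have : a * b12 = 0 := by rw [hcz] at e2; linarith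
    rcases mul_eq_zero.1 this with h | h; exacts [h, absurd h h12]
  exact ⟨haz, hbz, hcz⟩


lemma fin4_cases (j : Fin 4) : j = 0 ∨ j = 1 ∨ j = 2 ∨ j = 3 := by revert j; decide

set_option maxHeartbeats 4000000 in
/-- A Minkowski-orthogonal matrix with determinant 1 having three distinct null
eigen-rays is a scalar multiple of the identity. -/
lemma rigidity (M : Matrix (Fin 4) (Fin 4) ℝ)
    (hpres : ∀ u w, MB (M.mulVec u) (M.mulVec w) = MB u w)
    (hdet : M.det = 1)
    (v₁ v₂ v₃ : Fin 4 → ℝ)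
    (hn1 : MB v₁ v₁ = 0) (hn2 : MB v₂ v₂ = 0) (hn3 : MB v₃ v₃ = 0)
    (h12 : MB v₁ v₂ ≠ 0) (h13 : MB v₁ v₃ ≠ 0) (h23 : MB v₂ v₃ ≠ 0)
    (μ₁ μ₂ μ₃ : ℝ)
    (hv1 : M.mulVec v₁ = μ₁ • v₁) (hv2 : M.mulVec v₂ = μ₂ • v₂) (hv3 : M.mulVec v₃ = μ₃ • v₃) :
    ∃ μ : ℝ, μ ≠ 0 ∧ ∀ u, M.mulVec u = μ • u := by
  -- the eigenvalues multiply pairwise to 1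
  have hμ12 : μ₁ * μ₂ = 1 := by
    have h := hpres v₁ v₂
    rw [hv1, hv2, MB_smul_smul] at h
    have h' : (μ₁ * μ₂) * MB v₁ v₂ = 1 * MB v₁ v₂ := by rw [one_mul]; exact h
    exact mul_right_cancel₀ h12 h' 
  have hμ13 : μ₁ * μ₃ = 1 := by
    have h := hpres v₁ v₃
    rw [hv1, hv3, MB_smul_smul] at h
    have h' : (μ₁ * μ₃) * MB v₁ v₃ = 1 * MB v₁ v₃ := by rw [one_mul]; exact h
    exact mul_right_cancel₀ h13 h' 
  have hμ23 : μ₂ * μ₃ = 1 := by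
    have h := hpres v₂ v₃
    rw [hv2, hv3, MB_smul_smul] at h
    have h' : (μ₂ * μ₃) * MB v₂ v₃ = 1 * MB v₂ v₃ := by rw [one_mul]; exact h
    exact mul_right_cancel₀ h23 h' 
  have hμ0 : μ₁ ≠ 0 := left_ne_zero_of_mul_eq_one hμ12
  have hsq : μ₁ ^ 2 = 1 := by
    linear_combination (μ₁ * μ₃) * hμ12 + hμ13 - μ₁ ^ 2 * hμ23
  have hμ2 : μ₂ = μ₁ := by
    have h : μ₁ * μ₂ = μ₁ * μ₁ := by rw [hμ12]; linear_combination - hsq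
    exact mul_left_cancel₀ hμ0 h
  have hμ3 : μ₃ = μ₁ := by
    have h : μ₁ * μ₃ = μ₁ * μ₁ := by rw [hμ13]; linear_combination - hsq
    exact mul_left_cancel₀ hμ0 h
  -- find a vector orthogonal to all three
  set φ : (Fin 4 → ℝ) →ₗ[ℝ] (Fin 3 → ℝ) :=
    { toFun := fun u => ![MB u v₁, MB u v₂, MB u v₃]
      map_add' := by
        intro u u'
        funext k
        fin_cases k <;> simp [MB, Pi.add_apply] <;> ring
      map_smul' := by
        intro a u
        funext k
        fin_cases k <;> simp [MB, Pi.smul_apply, smul_eq_mul] <;> ring } with hφ_def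
  have hker : LinearMap.ker φ ≠ ⊥ := by
    intro h
    have hinj := LinearMap.ker_eq_bot.1 h
    have hle := LinearMap.finrank_le_finrank_of_injective hinj
    simp at hle
  obtain ⟨w, hwmem, hw0⟩ := (Submodule.ne_bot_iff _).1 hker
  have hφw : φ w = 0 := LinearMap.mem_ker.1 hwmem
  have hw1 : MB w v₁ = 0 := by have := congrFun hφw 0; simpa [hφ_def] using this
  have hw2 : MB w v₂ = 0 := by have := congrFun hφw 1; simpa [hφ_def] using this
  have hw3 : MB w v₃ = 0 := by have := congrFun hφw 2; simpa [hφ_def] using this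
  -- linear independence of v₁, v₂, v₃, w
  have li : LinearIndependent ℝ ![v₁, v₂, v₃, w] := by
    rw [Fintype.linearIndependent_iff]
    intro g hg
    rw [Fin.sum_univ_four] at hg
    have hg' : g 0 • v₁ + g 1 • v₂ + g 2 • v₃ + g 3 • w = 0 := by simpa using hg
    have e1 : g 1 * MB v₁ v₂ + g 2 * MB v₁ v₃ = 0 := by
      have h := congrArg (fun z => MB z v₁) hg'
      simp only [MB_comb, MB_zero_left] at h
      rw [hn1, hw1, MB_comm v₂ v₁, MB_comm v₃ v₁] at h
      linarith [h]
    have e2 : g 0 * MB v₁ v₂ + g 2 * MB v₂ v₃ = 0 := by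
      have h := congrArg (fun z => MB z v₂) hg'
      simp only [MB_comb, MB_zero_left] at h
      rw [hn2, hw2, MB_comm v₃ v₂] at h
      linarith [h]
    have e3 : g 0 * MB v₁ v₃ + g 1 * MB v₂ v₃ = 0 := by
      have h := congrArg (fun z => MB z v₃) hg'
      simp only [MB_comb, MB_zero_left] at h
      rw [hn3, hw3] at h
      linarith [h]
    obtain ⟨hz0, hz1, hz2⟩ := solve3 h12 h13 h23 e1 e2 e3
    have hz3 : g 3 = 0 := by
      rw [hz0, hz1, hz2] at hg'
      simp only [zero_smul, zero_add] at hg'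
      rcases smul_eq_zero.1 hg' with h | h
      · exact h
      · exact absurd h hw0
    intro i
    rcases fin4_cases i with rfl | rfl | rfl | rfl
    exacts [hz0, hz1, hz2, hz3]
  -- a basis of eigenvectors
  have hcard : Fintype.card (Fin 4) = Module.finrank ℝ (Fin 4 → ℝ) := by simp
  obtain ⟨b, hb⟩ : ∃ b : Module.Basis (Fin 4) ℝ (Fin 4 → ℝ), ⇑b = ![v₁, v₂, v₃, w] :=
    ⟨basisOfLinearIndependentOfCardEqFinrank li hcard,
      coe_basisOfLinearIndependentOfCardEqFinrank li hcard⟩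
  have hb0 : b 0 = v₁ := by rw [hb]; rfl
  have hb1 : b 1 = v₂ := by rw [hb]; rfl
  have hb2 : b 2 = v₃ := by rw [hb]; rfl
  have hb3 : b 3 = w := by rw [hb]; rfl
  -- w is an eigenvector as well
  have hOw : ∀ (v : Fin 4 → ℝ) (μ : ℝ), μ ≠ 0 → M.mulVec v = μ • v → MB w v = 0 →
      MB (M.mulVec w) v = 0 := by
    intro v μ hμ hv hwv
    have h := hpres w v
    rw [hv, MB_smul_right, hwv] at h
    rcases mul_eq_zero.1 h with h | h
    · exact absurd h hμ
    · exact h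
  have hμ20 : μ₂ ≠ 0 := by rw [hμ2]; exact hμ0
  have hμ30 : μ₃ ≠ 0 := by rw [hμ3]; exact hμ0
  have hOw1 : MB (M.mulVec w) v₁ = 0 := hOw v₁ μ₁ hμ0 hv1 hw1
  have hOw2 : MB (M.mulVec w) v₂ = 0 := hOw v₂ μ₂ hμ20 hv2 hw2
  have hOw3 : MB (M.mulVec w) v₃ = 0 := hOw v₃ μ₃ hμ30 hv3 hw3
  obtain ⟨r0, hr0⟩ : ∃ r, r = b.repr (M.mulVec w) 0 := ⟨_, rfl⟩
  obtain ⟨r1, hr1⟩ : ∃ r, r = b.repr (M.mulVec w) 1 := ⟨_, rfl⟩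
  obtain ⟨r2, hr2⟩ : ∃ r, r = b.repr (M.mulVec w) 2 := ⟨_, rfl⟩
  obtain ⟨r3, hr3⟩ : ∃ r, r = b.repr (M.mulVec w) 3 := ⟨_, rfl⟩
  have hrep : r0 • v₁ + r1 • v₂ + r2 • v₃ + r3 • w = M.mulVec w := by
    rw [hr0, hr1, hr2, hr3]
    have h := Module.Basis.sum_repr b (M.mulVec w)
    simp only [Fin.sum_univ_four, hb0, hb1, hb2, hb3] at h
    exact h
  have E1 : r1 * MB v₁ v₂ + r2 * MB v₁ v₃ = 0 := by
    have h := congrArg (fun z => MB z v₁) hrep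
    simp only [MB_comb] at h
    rw [hn1, hw1, MB_comm v₂ v₁, MB_comm v₃ v₁, hOw1] at h
    linarith [h]
  have E2 : r0 * MB v₁ v₂ + r2 * MB v₂ v₃ = 0 := by
    have h := congrArg (fun z => MB z v₂) hrep
    simp only [MB_comb] at h
    rw [hn2, hw2, MB_comm v₃ v₂, hOw2] at h
    linarith [h]
  have E3 : r0 * MB v₁ v₃ + r1 * MB v₂ v₃ = 0 := by
    have h := congrArg (fun z => MB z v₃) hrep
    simp only [MB_comb] at h
    rw [hn3, hw3, hOw3] at h
    linarith [h]
  obtain ⟨hz0, hz1, hz2⟩ := solve3 h12 h13 h23 E1 E2 E3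
  have hMw : M.mulVec w = r3 • w := by
    rw [← hrep, hz0, hz1, hz2]
    simp
  -- w is not null
  have hww : MB w w ≠ 0 := by
    intro h0
    apply hw0
    have hall : ∀ u, MB w u = 0 := by
      intro u
      have hu := Module.Basis.sum_repr b u
      simp only [Fin.sum_univ_four, hb0, hb1, hb2, hb3] at hu
      rw [← hu, MB_comb_right, hw1, hw2, hw3, h0]
      ring
    have h1 := hall (fun j => ee j * w j)
    simp only [MB] at h1
    norm_num at h1
    have s0 : w 0 ^ 2 = 0 := by nlinarith [sq_nonneg (w 0), sq_nonneg (w 1), sq_nonneg (w 2), sq_nonneg (w 3)]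
    have s1 : w 1 ^ 2 = 0 := by nlinarith [sq_nonneg (w 0), sq_nonneg (w 1), sq_nonneg (w 2), sq_nonneg (w 3)]
    have s2 : w 2 ^ 2 = 0 := by nlinarith [sq_nonneg (w 0), sq_nonneg (w 1), sq_nonneg (w 2), sq_nonneg (w 3)]
    have s3 : w 3 ^ 2 = 0 := by nlinarith [sq_nonneg (w 0), sq_nonneg (w 1), sq_nonneg (w 2), sq_nonneg (w 3)]
    funext j
    rcases fin4_cases j with rfl | rfl | rfl | rfl
    exacts [pow_eq_zero_iff two_ne_zero |>.1 s0, pow_eq_zero_iff two_ne_zero |>.1 s1,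
      pow_eq_zero_iff two_ne_zero |>.1 s2, pow_eq_zero_iff two_ne_zero |>.1 s3]
  -- determinant computation in the eigenbasis
  have k0 : M.mulVec (b 0) = (![μ₁, μ₂, μ₃, r3] 0) • b 0 := by rw [hb0]; exact hv1
  have k1 : M.mulVec (b 1) = (![μ₁, μ₂, μ₃, r3] 1) • b 1 := by rw [hb1]; exact hv2
  have k2 : M.mulVec (b 2) = (![μ₁, μ₂, μ₃, r3] 2) • b 2 := by rw [hb2]; exact hv3
  have k3 : M.mulVec (b 3) = (![μ₁, μ₂, μ₃, r3] 3) • b 3 := by rw [hb3]; exact hMw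
  have key : ∀ j, M.mulVec (b j) = (![μ₁, μ₂, μ₃, r3] j) • b j := by
    intro j
    rcases fin4_cases j with rfl | rfl | rfl | rfl
    exacts [k0, k1, k2, k3]
  have hdiag : LinearMap.toMatrix b b (Matrix.toLin' M) = Matrix.diagonal ![μ₁, μ₂, μ₃, r3] := by
    ext i j
    rw [LinearMap.toMatrix_apply, Matrix.toLin'_apply, key j, map_smul, Finsupp.smul_apply,
      Module.Basis.repr_self]
    rcases eq_or_ne i j with rfl | h
    · simp
    · simp [Matrix.diagonal_apply_ne _ h, Finsupp.single_eq_of_ne h]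
  have hdetd : M.det = μ₁ * μ₂ * μ₃ * r3 := by
    have h1 : M.det = LinearMap.det (Matrix.toLin' M) := (LinearMap.det_toLin' M).symm
    have h2 : LinearMap.det (Matrix.toLin' M) = (LinearMap.toMatrix b b (Matrix.toLin' M)).det :=
      (LinearMap.det_toMatrix b _).symm
    rw [h1, h2, hdiag, Matrix.det_diagonal, Fin.prod_univ_four]
    norm_num
    rfl
  have hprod : μ₁ * μ₂ * μ₃ * r3 = 1 := by rw [← hdetd]; exact hdet
  have hμr : μ₁ * r3 = 1 := by
    rw [hμ2, hμ3] at hprod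
    linear_combination hprod - μ₁ * r3 * hsq
  have hr3eq : r3 = μ₁ := by
    linear_combination μ₁ * hμr - r3 * hsq
  -- conclude
  refine ⟨μ₁, hμ0, ?_⟩
  have key' : ∀ j, M.mulVec (b j) = μ₁ • b j := by
    intro j
    rw [key j]
    rcases fin4_cases j with rfl | rfl | rfl | rfl
    · rfl
    · rw [show ((![μ₁, μ₂, μ₃, r3] : Fin 4 → ℝ) 1) = μ₂ from rfl, hμ2]
    · rw [show ((![μ₁, μ₂, μ₃, r3] : Fin 4 → ℝ) 2) = μ₃ from rfl, hμ3]
    · rw [show ((![μ₁, μ₂, μ₃, r3] : Fin 4 → ℝ) 3) = r3 from rfl, hr3eq]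
  have hfid : Matrix.toLin' M = (μ₁ • LinearMap.id : (Fin 4 → ℝ) →ₗ[ℝ] (Fin 4 → ℝ)) := by
    apply b.ext
    intro i
    rw [Matrix.toLin'_apply, key' i]
    simp
  intro u
  have h := LinearMap.congr_fun hfid u
  rw [Matrix.toLin'_apply] at h
  simpa using h

end CastAux

open CastAux in
/-- If Castillon's problem for the sphere and an even number of points `p₁, …, pₙ` has at
least three solutions, i.e. the composition `I_{pₙ} ∘ ⋯ ∘ I_{p₁}` has three pairwise
distinct fixed points on the sphere, then it is the identity map of the sphere. -/
theorem castillon_sphere_even_three_solutions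
    (o : E3) (ρ : ℝ) (hρ : 0 < ρ)
    (n : ℕ) (hn : Even n)
    (p : Fin n → E3) (hpC : ∀ i, p i ∉ sphere o ρ)
    (I : Fin n → E3 → E3) (hI : ∀ i, ChordMap3 o ρ (p i) (I i))
    (x₁ x₂ x₃ : E3)
    (hx₁ : x₁ ∈ sphere o ρ) (hx₂ : x₂ ∈ sphere o ρ) (hx₃ : x₃ ∈ sphere o ρ)
    (h12 : x₁ ≠ x₂) (h13 : x₁ ≠ x₃) (h23 : x₂ ≠ x₃)
    (hf₁ : chain3 (List.ofFn I) x₁ = x₁)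
    (hf₂ : chain3 (List.ofFn I) x₂ = x₂)
    (hf₃ : chain3 (List.ofFn I) x₃ = x₃) :
    ∀ y ∈ sphere o ρ, chain3 (List.ofFn I) y = y := by
  have hmap : (List.ofFn (fun i => (p i, I i))).map Prod.snd = List.ofFn I := by
    rw [List.map_ofFn]; rfl
  have hl : ∀ a ∈ List.ofFn (fun i => (p i, I i)), a.1 ∉ sphere o ρ ∧ ChordMap3 o ρ a.1 a.2 := by
    intro a ha
    rw [List.mem_ofFn] at ha
    obtain ⟨i, rfl⟩ := ha
    exact ⟨hpC i, hI i⟩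
  have hnon : ∀ a ∈ List.ofFn (fun i => (p i, I i)), a.1 ∉ sphere o ρ := fun a ha => (hl a ha).1
  obtain ⟨-, μ₁, hμ₁0, hμ₁⟩ := chain_key hρ _ hl x₁ hx₁
  obtain ⟨-, μ₂, hμ₂0, hμ₂⟩ := chain_key hρ _ hl x₂ hx₂
  obtain ⟨-, μ₃, hμ₃0, hμ₃⟩ := chain_key hρ _ hl x₃ hx₃
  rw [hmap, hf₁] at hμ₁
  rw [hmap, hf₂] at hμ₂
  rw [hmap, hf₃] at hμ₃
  have hpres := Mprod_preserves hρ _ hnon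
  have hdet : (Mprod o ρ (List.ofFn fun i => (p i, I i))).det = 1 := by
    rw [Mprod_det hρ _ hnon, List.length_ofFn]
    exact hn.neg_one_pow
  obtain ⟨μ, hμ0, hμ⟩ := rigidity _ hpres hdet (lift o ρ x₁) (lift o ρ x₂) (lift o ρ x₃)
    ((mem_sphere_iff_MB o hρ.le x₁).1 hx₁) ((mem_sphere_iff_MB o hρ.le x₂).1 hx₂)
    ((mem_sphere_iff_MB o hρ.le x₃).1 hx₃)
    (MB_sphere_ne hρ hx₁ hx₂ h12) (MB_sphere_ne hρ hx₁ hx₃ h13) (MB_sphere_ne hρ hx₂ hx₃ h23)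
    μ₁ μ₂ μ₃ hμ₁ hμ₂ hμ₃
  intro y hy
  obtain ⟨hTy, c, hc, hMy⟩ := chain_key hρ _ hl y hy
  rw [hmap] at hMy
  have h2 := hμ (lift o ρ y)
  rw [hMy] at h2
  have h0 := congrFun h2 0
  simp only [Pi.smul_apply, smul_eq_mul, lift_zero] at h0
  have hcμ : c = μ := mul_right_cancel₀ (ne_of_gt hρ) h0
  rw [hcμ] at h2
  exact lift_inj o ρ (smul_right_injective (Fin 4 → ℝ) hμ0 h2)
end

section
/- (Klamkin's generalization of the butterfly theorem.) Let a and b be two distinct points of the circle C and let ℓ be the line through a and b. Let p, q, r, s be points lying strictly between a and b on ℓ (in the open segment ab, hence inside C), and let x, y, z, t ∈ C, none lying on ℓ, be such that p lies on the line xy, q on the line yz, r on the line zt, and s on the line tx. If dist(a, q) = dist(b, s), then dist(p, q) = dist(r, s). -/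
open Metric

lemma pt_ext {u v : E2} (h0 : u 0 = v 0) (h1 : u 1 = v 1) : u = v := by
  ext i; fin_cases i <;> assumption

lemma dist_sq_coords (u v : E2) :
    dist u v ^ 2 = (u 0 - v 0)^2 + (u 1 - v 1)^2 := by
  rw [EuclideanSpace.dist_eq, Real.sq_sqrt (by positivity)]
  simp [Fin.sum_univ_two, Real.dist_eq, sq_abs]

lemma lineMap_coord (u v : E2) (c : ℝ) (i : Fin 2) :
    (AffineMap.lineMap u v c : E2) i = u i + c * (v i - u i) := by
  simp [AffineMap.lineMap_apply, PiLp.add_apply, PiLp.smul_apply, PiLp.sub_apply, smul_eq_mul]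
  ring

lemma cross_of_mem_span {w w₁ w₂ : E2} (h : w ∈ affineSpan ℝ ({w₁, w₂} : Set E2)) :
    (w₁ 0 - w 0) * (w₂ 1 - w 1) - (w₁ 1 - w 1) * (w₂ 0 - w 0) = 0 := by
  have hc : Collinear ℝ ({w, w₁, w₂} : Set E2) :=
    collinear_insert_of_mem_affineSpan_pair h
  rw [collinear_iff_of_mem (Set.mem_insert w _)] at hc
  obtain ⟨v, hv⟩ := hc
  obtain ⟨r₁, h₁⟩ := hv w₁ (by simp)
  obtain ⟨r₂, h₂⟩ := hv w₂ (by simp)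
  have e1 : ∀ i : Fin 2, w₁ i = r₁ * v i + w i := by
    intro i; rw [h₁]; simp
  have e2 : ∀ i : Fin 2, w₂ i = r₂ * v i + w i := by
    intro i; rw [h₂]; simp
  rw [e1 0, e1 1, e2 0, e2 1]; ring

lemma eta_ne_zero {a b w : E2} (hK : ((b 0 - a 0)^2 + (b 1 - a 1)^2) ≠ 0)
    (hw : w ∉ affineSpan ℝ ({a, b} : Set E2)) :
    (b 0 - a 0)*(w 1 - a 1) - (b 1 - a 1)*(w 0 - a 0) ≠ 0 := by
  intro hη
  apply hw
  have hm := AffineMap.lineMap_mem_affineSpan_pair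
      ((((b 0 - a 0)*(w 0 - a 0) + (b 1 - a 1)*(w 1 - a 1))) / ((b 0 - a 0)^2 + (b 1 - a 1)^2)) a b
  have hwl : AffineMap.lineMap a b ((((b 0 - a 0)*(w 0 - a 0) + (b 1 - a 1)*(w 1 - a 1))) / ((b 0 - a 0)^2 + (b 1 - a 1)^2)) = w := by
    apply pt_ext
    · rw [lineMap_coord]
      field_simp
      linear_combination ((b 1 - a 1))*hη
    · rw [lineMap_coord]
      field_simp
      linear_combination (-(b 0 - a 0))*hη
  rwa [hwl] at hm


lemma chord_aux (K H ξ₁ η₁ ξ₂ η₂ k₁ k₂ P : ℝ) (hη₁ : η₁ ≠ 0) (hη₂ : η₂ ≠ 0)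
    (hne : ¬(ξ₁ = ξ₂ ∧ η₁ = η₂))
    (hk₁ : η₁ * k₁ = ξ₁) (hk₂ : η₂ * k₂ = ξ₂)
    (c₁ : ξ₁^2 + η₁^2 = K*ξ₁ + H*η₁) (c₂ : ξ₂^2 + η₂^2 = K*ξ₂ + H*η₂)
    (l : P * (η₂ - η₁) = ξ₁*η₂ - ξ₂*η₁) :
    K*(k₁*k₂-1) + H*(k₁+k₂) ≠ 0 ∧
      P * (K*(k₁*k₂-1) + H*(k₁+k₂)) = (K*k₁+H)*(K*k₂+H) := by
  have e₁ : η₁ * (k₁^2+1) = K*k₁ + H := by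
    apply mul_left_cancel₀ hη₁
    linear_combination c₁ + (η₁*k₁ + ξ₁ - K) * hk₁
  have e₂ : η₂ * (k₂^2+1) = K*k₂ + H := by
    apply mul_left_cancel₀ hη₂
    linear_combination c₂ + (η₂*k₂ + ξ₂ - K) * hk₂
  have hη12 : η₁ ≠ η₂ := by
    intro h
    rw [h] at l
    have hξ : η₂ * (ξ₁ - ξ₂) = 0 := by linear_combination -l
    rcases mul_eq_zero.mp hξ with h' | h'
    · exact hη₂ h'
    · exact hne ⟨by linarith, h⟩
  have key : (η₂ - η₁) * ((k₁^2+1) * (k₂^2+1)) = (k₁ - k₂) * (K*(k₁*k₂-1) + H*(k₁+k₂)) := by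
    linear_combination (k₁^2+1) * e₂ - (k₂^2+1) * e₁
  have hk12 : k₁ ≠ k₂ := by
    intro h
    have : (η₂ - η₁) * ((k₁^2+1) * (k₂^2+1)) = 0 := by rw [key, h]; ring
    have h2 : (k₁^2+1) * (k₂^2+1) ≠ 0 := by positivity
    have := mul_eq_zero.mp this
    rcases this with h' | h'
    · exact hη12 (by linarith)
    · exact h2 h'
  have hD : K*(k₁*k₂-1) + H*(k₁+k₂) ≠ 0 := by
    intro h
    have : (η₂ - η₁) * ((k₁^2+1) * (k₂^2+1)) = 0 := by rw [key, h]; ring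
    rcases mul_eq_zero.mp this with h' | h'
    · exact hη12 (by linarith)
    · exact (by positivity : (k₁^2+1) * (k₂^2+1) ≠ 0) h'
  refine ⟨hD, ?_⟩
  have l' : P * (η₂ - η₁) = (k₁ - k₂) * (η₁ * η₂) := by
    linear_combination l - η₂ * hk₁ + η₁ * hk₂
  apply mul_left_cancel₀ (sub_ne_zero.mpr hk12)
  calc (k₁ - k₂) * (P * (K*(k₁*k₂-1) + H*(k₁+k₂)))
      = P * ((η₂ - η₁) * ((k₁^2+1) * (k₂^2+1))) := by rw [key]; ring
    _ = ((k₁ - k₂) * (η₁ * η₂)) * ((k₁^2+1) * (k₂^2+1)) := by rw [← l']; ring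
    _ = (k₁ - k₂) * ((η₁ * (k₁^2+1)) * (η₂ * (k₂^2+1))) := by ring
    _ = (k₁ - k₂) * ((K*k₁+H)*(K*k₂+H)) := by rw [e₁, e₂]

lemma core (K H ξx ηx ξy ηy ξz ηz ξt ηt P Q R S : ℝ)
    (hηx : ηx ≠ 0) (hηy : ηy ≠ 0) (hηz : ηz ≠ 0) (hηt : ηt ≠ 0)
    (hxy : ¬(ξx = ξy ∧ ηx = ηy)) (hyz : ¬(ξy = ξz ∧ ηy = ηz))
    (hzt : ¬(ξz = ξt ∧ ηz = ηt)) (htx : ¬(ξt = ξx ∧ ηt = ηx))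
    (cx : ξx^2 + ηx^2 = K*ξx + H*ηx) (cy : ξy^2 + ηy^2 = K*ξy + H*ηy)
    (cz : ξz^2 + ηz^2 = K*ξz + H*ηz) (ct : ξt^2 + ηt^2 = K*ξt + H*ηt)
    (lp : P * (ηy - ηx) = ξx*ηy - ξy*ηx)
    (lq : Q * (ηz - ηy) = ξy*ηz - ξz*ηy)
    (lr : R * (ηt - ηz) = ξz*ηt - ξt*ηz)
    (ls : S * (ηx - ηt) = ξt*ηx - ξx*ηt)
    (hQS : Q + S = K) : P + R = K := by
  set kx := ξx / ηx with hkxd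
  set ky := ξy / ηy with hkyd
  set kz := ξz / ηz with hkzd
  set kt := ξt / ηt with hktd
  have hkx : ηx * kx = ξx := by rw [hkxd]; field_simp
  have hky : ηy * ky = ξy := by rw [hkyd]; field_simp
  have hkz : ηz * kz = ξz := by rw [hkzd]; field_simp
  have hkt : ηt * kt = ξt := by rw [hktd]; field_simp
  obtain ⟨hDxy, hPxy⟩ := chord_aux K H ξx ηx ξy ηy kx ky P hηx hηy hxy hkx hky cx cy lp
  obtain ⟨hDyz, hQyz⟩ := chord_aux K H ξy ηy ξz ηz ky kz Q hηy hηz hyz hky hkz cy cz lq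
  obtain ⟨hDzt, hRzt⟩ := chord_aux K H ξz ηz ξt ηt kz kt R hηz hηt hzt hkz hkt cz ct lr
  obtain ⟨hDtx, hStx⟩ := chord_aux K H ξt ηt ξx ηx kt kx S hηt hηx htx hkt hkx ct cx ls
  have gid : (P + R - K) * ((K*(kx*ky-1) + H*(kx+ky)) * (K*(kz*kt-1) + H*(kz+kt)))
      = (Q + S - K) * ((K*(ky*kz-1) + H*(ky+kz)) * (K*(kt*kx-1) + H*(kt+kx))) := by
    linear_combination (K*(kz*kt-1) + H*(kz+kt)) * hPxy + (K*(kx*ky-1) + H*(kx+ky)) * hRzt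
      - (K*(kt*kx-1) + H*(kt+kx)) * hQyz - (K*(ky*kz-1) + H*(ky+kz)) * hStx
  have h0 : (P + R - K) * ((K*(kx*ky-1) + H*(kx+ky)) * (K*(kz*kt-1) + H*(kz+kt))) = 0 := by
    rw [gid]
    have : Q + S - K = 0 := by linarith
    rw [this]; ring
  rcases mul_eq_zero.mp h0 with h' | h'
  · linarith
  · exact absurd h' (mul_ne_zero hDxy hDzt)

set_option maxHeartbeats 2000000 in
/-- Klamkin's generalization of the butterfly theorem: let `p, q, r, s` be points strictly
between the ends `a, b` of a chord of the circle `C`, and let `xyzt` be an inscribed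
quadrilateral whose sides `xy`, `yz`, `zt`, `tx` pass through `p`, `q`, `r`, `s`
respectively. If `dist a q = dist b s`, then `dist p q = dist r s`. -/
theorem klamkin_butterfly
    (o : E2) (ρ : ℝ) (hρ : 0 < ρ)
    (a b : E2) (hab : a ≠ b)
    (haC : a ∈ sphere o ρ) (hbC : b ∈ sphere o ρ)
    (p q r s : E2)
    (hp : Sbtw ℝ a p b) (hq : Sbtw ℝ a q b)
    (hr : Sbtw ℝ a r b) (hs : Sbtw ℝ a s b)
    (x y z t : E2)
    (hxC : x ∈ sphere o ρ) (hyC : y ∈ sphere o ρ)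
    (hzC : z ∈ sphere o ρ) (htC : t ∈ sphere o ρ)
    (hxl : x ∉ affineSpan ℝ ({a, b} : Set E2))
    (hyl : y ∉ affineSpan ℝ ({a, b} : Set E2))
    (hzl : z ∉ affineSpan ℝ ({a, b} : Set E2))
    (htl : t ∉ affineSpan ℝ ({a, b} : Set E2))
    (hpxy : p ∈ affineSpan ℝ ({x, y} : Set E2))
    (hqyz : q ∈ affineSpan ℝ ({y, z} : Set E2))
    (hrzt : r ∈ affineSpan ℝ ({z, t} : Set E2))
    (hstx : s ∈ affineSpan ℝ ({t, x} : Set E2))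
    (hqs : dist a q = dist b s) :
    dist p q = dist r s := by
  -- parameters along the chord
  obtain ⟨up, hup, hpu⟩ := hp.mem_image_Ioo
  obtain ⟨uq, huq, hqu⟩ := hq.mem_image_Ioo
  obtain ⟨ur, hur, hru⟩ := hr.mem_image_Ioo
  obtain ⟨us, hus, hsu⟩ := hs.mem_image_Ioo
  have hp0 : p 0 = a 0 + up * (b 0 - a 0) := by rw [← hpu, lineMap_coord]
  have hp1 : p 1 = a 1 + up * (b 1 - a 1) := by rw [← hpu, lineMap_coord]
  have hq0 : q 0 = a 0 + uq * (b 0 - a 0) := by rw [← hqu, lineMap_coord]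
  have hq1 : q 1 = a 1 + uq * (b 1 - a 1) := by rw [← hqu, lineMap_coord]
  have hr0 : r 0 = a 0 + ur * (b 0 - a 0) := by rw [← hru, lineMap_coord]
  have hr1 : r 1 = a 1 + ur * (b 1 - a 1) := by rw [← hru, lineMap_coord]
  have hs0 : s 0 = a 0 + us * (b 0 - a 0) := by rw [← hsu, lineMap_coord]
  have hs1 : s 1 = a 1 + us * (b 1 - a 1) := by rw [← hsu, lineMap_coord]
  have hK : ((b 0 - a 0)^2 + (b 1 - a 1)^2) ≠ 0 := by
    intro h
    apply hab
    apply pt_ext <;> nlinarith [sq_nonneg (b 0 - a 0), sq_nonneg (b 1 - a 1)]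
  -- squared circle equations
  have ca' : (a 0 - o 0)^2 + (a 1 - o 1)^2 = ρ^2 := by
    rw [← dist_sq_coords, mem_sphere.mp haC]
  have cb' : (b 0 - o 0)^2 + (b 1 - o 1)^2 = ρ^2 := by
    rw [← dist_sq_coords, mem_sphere.mp hbC]
  have cx' : (x 0 - o 0)^2 + (x 1 - o 1)^2 = ρ^2 := by
    rw [← dist_sq_coords, mem_sphere.mp hxC]
  have cy' : (y 0 - o 0)^2 + (y 1 - o 1)^2 = ρ^2 := by
    rw [← dist_sq_coords, mem_sphere.mp hyC]
  have cz' : (z 0 - o 0)^2 + (z 1 - o 1)^2 = ρ^2 := by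
    rw [← dist_sq_coords, mem_sphere.mp hzC]
  have ct' : (t 0 - o 0)^2 + (t 1 - o 1)^2 = ρ^2 := by
    rw [← dist_sq_coords, mem_sphere.mp htC]
  -- circle equations in chord coordinates
  have cx : ((b 0 - a 0)*(x 0 - a 0) + (b 1 - a 1)*(x 1 - a 1))^2 + ((b 0 - a 0)*(x 1 - a 1) - (b 1 - a 1)*(x 0 - a 0))^2 = ((b 0 - a 0)^2 + (b 1 - a 1)^2)*((b 0 - a 0)*(x 0 - a 0) + (b 1 - a 1)*(x 1 - a 1)) + (2*((b 0 - a 0)*(o 1 - a 1) - (b 1 - a 1)*(o 0 - a 0)))*((b 0 - a 0)*(x 1 - a 1) - (b 1 - a 1)*(x 0 - a 0)) := by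
    linear_combination ((b 0 - a 0)^2 + (b 1 - a 1)^2)*cx' - ((b 0 - a 0)^2 + (b 1 - a 1)^2)*ca' - ((b 0 - a 0)*(x 0 - a 0) + (b 1 - a 1)*(x 1 - a 1))*cb' + ((b 0 - a 0)*(x 0 - a 0) + (b 1 - a 1)*(x 1 - a 1))*ca'
  have cy : ((b 0 - a 0)*(y 0 - a 0) + (b 1 - a 1)*(y 1 - a 1))^2 + ((b 0 - a 0)*(y 1 - a 1) - (b 1 - a 1)*(y 0 - a 0))^2 = ((b 0 - a 0)^2 + (b 1 - a 1)^2)*((b 0 - a 0)*(y 0 - a 0) + (b 1 - a 1)*(y 1 - a 1)) + (2*((b 0 - a 0)*(o 1 - a 1) - (b 1 - a 1)*(o 0 - a 0)))*((b 0 - a 0)*(y 1 - a 1) - (b 1 - a 1)*(y 0 - a 0)) := by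
    linear_combination ((b 0 - a 0)^2 + (b 1 - a 1)^2)*cy' - ((b 0 - a 0)^2 + (b 1 - a 1)^2)*ca' - ((b 0 - a 0)*(y 0 - a 0) + (b 1 - a 1)*(y 1 - a 1))*cb' + ((b 0 - a 0)*(y 0 - a 0) + (b 1 - a 1)*(y 1 - a 1))*ca'
  have cz : ((b 0 - a 0)*(z 0 - a 0) + (b 1 - a 1)*(z 1 - a 1))^2 + ((b 0 - a 0)*(z 1 - a 1) - (b 1 - a 1)*(z 0 - a 0))^2 = ((b 0 - a 0)^2 + (b 1 - a 1)^2)*((b 0 - a 0)*(z 0 - a 0) + (b 1 - a 1)*(z 1 - a 1)) + (2*((b 0 - a 0)*(o 1 - a 1) - (b 1 - a 1)*(o 0 - a 0)))*((b 0 - a 0)*(z 1 - a 1) - (b 1 - a 1)*(z 0 - a 0)) := by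
    linear_combination ((b 0 - a 0)^2 + (b 1 - a 1)^2)*cz' - ((b 0 - a 0)^2 + (b 1 - a 1)^2)*ca' - ((b 0 - a 0)*(z 0 - a 0) + (b 1 - a 1)*(z 1 - a 1))*cb' + ((b 0 - a 0)*(z 0 - a 0) + (b 1 - a 1)*(z 1 - a 1))*ca'
  have ct : ((b 0 - a 0)*(t 0 - a 0) + (b 1 - a 1)*(t 1 - a 1))^2 + ((b 0 - a 0)*(t 1 - a 1) - (b 1 - a 1)*(t 0 - a 0))^2 = ((b 0 - a 0)^2 + (b 1 - a 1)^2)*((b 0 - a 0)*(t 0 - a 0) + (b 1 - a 1)*(t 1 - a 1)) + (2*((b 0 - a 0)*(o 1 - a 1) - (b 1 - a 1)*(o 0 - a 0)))*((b 0 - a 0)*(t 1 - a 1) - (b 1 - a 1)*(t 0 - a 0)) := by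
    linear_combination ((b 0 - a 0)^2 + (b 1 - a 1)^2)*ct' - ((b 0 - a 0)^2 + (b 1 - a 1)^2)*ca' - ((b 0 - a 0)*(t 0 - a 0) + (b 1 - a 1)*(t 1 - a 1))*cb' + ((b 0 - a 0)*(t 0 - a 0) + (b 1 - a 1)*(t 1 - a 1))*ca'
  -- η ≠ 0 for the four circle points
  have hex : ((b 0 - a 0)*(x 1 - a 1) - (b 1 - a 1)*(x 0 - a 0)) ≠ 0 := eta_ne_zero hK hxl
  have hey : ((b 0 - a 0)*(y 1 - a 1) - (b 1 - a 1)*(y 0 - a 0)) ≠ 0 := eta_ne_zero hK hyl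
  have hez : ((b 0 - a 0)*(z 1 - a 1) - (b 1 - a 1)*(z 0 - a 0)) ≠ 0 := eta_ne_zero hK hzl
  have het : ((b 0 - a 0)*(t 1 - a 1) - (b 1 - a 1)*(t 0 - a 0)) ≠ 0 := eta_ne_zero hK htl
  -- membership of p,q,r,s in line ab, and distinctness of chord endpoints
  have hpab : p ∈ affineSpan ℝ ({a, b} : Set E2) := by
    rw [← hpu]; exact AffineMap.lineMap_mem_affineSpan_pair _ _ _
  have hqab : q ∈ affineSpan ℝ ({a, b} : Set E2) := by
    rw [← hqu]; exact AffineMap.lineMap_mem_affineSpan_pair _ _ _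
  have hrab : r ∈ affineSpan ℝ ({a, b} : Set E2) := by
    rw [← hru]; exact AffineMap.lineMap_mem_affineSpan_pair _ _ _
  have hsab : s ∈ affineSpan ℝ ({a, b} : Set E2) := by
    rw [← hsu]; exact AffineMap.lineMap_mem_affineSpan_pair _ _ _
  have hnexy : x ≠ y := by
    rintro rfl
    rw [Set.pair_eq_singleton, AffineSubspace.mem_affineSpan_singleton] at hpxy
    rw [hpxy] at hpab
    exact hxl hpab
  have hneyz : y ≠ z := by
    rintro rfl
    rw [Set.pair_eq_singleton, AffineSubspace.mem_affineSpan_singleton] at hqyz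
    rw [hqyz] at hqab
    exact hyl hqab
  have hnezt : z ≠ t := by
    rintro rfl
    rw [Set.pair_eq_singleton, AffineSubspace.mem_affineSpan_singleton] at hrzt
    rw [hrzt] at hrab
    exact hzl hrab
  have hnetx : t ≠ x := by
    rintro rfl
    rw [Set.pair_eq_singleton, AffineSubspace.mem_affineSpan_singleton] at hstx
    rw [hstx] at hsab
    exact htl hsab
  have hcxy : ¬(((b 0 - a 0)*(x 0 - a 0) + (b 1 - a 1)*(x 1 - a 1)) = ((b 0 - a 0)*(y 0 - a 0) + (b 1 - a 1)*(y 1 - a 1)) ∧ ((b 0 - a 0)*(x 1 - a 1) - (b 1 - a 1)*(x 0 - a 0)) = ((b 0 - a 0)*(y 1 - a 1) - (b 1 - a 1)*(y 0 - a 0))) := by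
    rintro ⟨h1, h2⟩
    apply hnexy
    apply pt_ext
    · have h3 : ((b 0 - a 0)^2 + (b 1 - a 1)^2) * (x 0 - y 0) = 0 := by
        linear_combination (b 0 - a 0)*h1 - (b 1 - a 1)*h2
      have := (mul_eq_zero.mp h3).resolve_left hK; linarith
    · have h3 : ((b 0 - a 0)^2 + (b 1 - a 1)^2) * (x 1 - y 1) = 0 := by
        linear_combination (b 1 - a 1)*h1 + (b 0 - a 0)*h2
      have := (mul_eq_zero.mp h3).resolve_left hK; linarith
  have hcyz : ¬(((b 0 - a 0)*(y 0 - a 0) + (b 1 - a 1)*(y 1 - a 1)) = ((b 0 - a 0)*(z 0 - a 0) + (b 1 - a 1)*(z 1 - a 1)) ∧ ((b 0 - a 0)*(y 1 - a 1) - (b 1 - a 1)*(y 0 - a 0)) = ((b 0 - a 0)*(z 1 - a 1) - (b 1 - a 1)*(z 0 - a 0))) := by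
    rintro ⟨h1, h2⟩
    apply hneyz
    apply pt_ext
    · have h3 : ((b 0 - a 0)^2 + (b 1 - a 1)^2) * (y 0 - z 0) = 0 := by
        linear_combination (b 0 - a 0)*h1 - (b 1 - a 1)*h2
      have := (mul_eq_zero.mp h3).resolve_left hK; linarith
    · have h3 : ((b 0 - a 0)^2 + (b 1 - a 1)^2) * (y 1 - z 1) = 0 := by
        linear_combination (b 1 - a 1)*h1 + (b 0 - a 0)*h2
      have := (mul_eq_zero.mp h3).resolve_left hK; linarith
  have hczt : ¬(((b 0 - a 0)*(z 0 - a 0) + (b 1 - a 1)*(z 1 - a 1)) = ((b 0 - a 0)*(t 0 - a 0) + (b 1 - a 1)*(t 1 - a 1)) ∧ ((b 0 - a 0)*(z 1 - a 1) - (b 1 - a 1)*(z 0 - a 0)) = ((b 0 - a 0)*(t 1 - a 1) - (b 1 - a 1)*(t 0 - a 0))) := by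
    rintro ⟨h1, h2⟩
    apply hnezt
    apply pt_ext
    · have h3 : ((b 0 - a 0)^2 + (b 1 - a 1)^2) * (z 0 - t 0) = 0 := by
        linear_combination (b 0 - a 0)*h1 - (b 1 - a 1)*h2
      have := (mul_eq_zero.mp h3).resolve_left hK; linarith
    · have h3 : ((b 0 - a 0)^2 + (b 1 - a 1)^2) * (z 1 - t 1) = 0 := by
        linear_combination (b 1 - a 1)*h1 + (b 0 - a 0)*h2
      have := (mul_eq_zero.mp h3).resolve_left hK; linarith
  have hctx : ¬(((b 0 - a 0)*(t 0 - a 0) + (b 1 - a 1)*(t 1 - a 1)) = ((b 0 - a 0)*(x 0 - a 0) + (b 1 - a 1)*(x 1 - a 1)) ∧ ((b 0 - a 0)*(t 1 - a 1) - (b 1 - a 1)*(t 0 - a 0)) = ((b 0 - a 0)*(x 1 - a 1) - (b 1 - a 1)*(x 0 - a 0))) := by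
    rintro ⟨h1, h2⟩
    apply hnetx
    apply pt_ext
    · have h3 : ((b 0 - a 0)^2 + (b 1 - a 1)^2) * (t 0 - x 0) = 0 := by
        linear_combination (b 0 - a 0)*h1 - (b 1 - a 1)*h2
      have := (mul_eq_zero.mp h3).resolve_left hK; linarith
    · have h3 : ((b 0 - a 0)^2 + (b 1 - a 1)^2) * (t 1 - x 1) = 0 := by
        linear_combination (b 1 - a 1)*h1 + (b 0 - a 0)*h2
      have := (mul_eq_zero.mp h3).resolve_left hK; linarith
  -- line equations
  have crp := cross_of_mem_span hpxy
  rw [hp0, hp1] at crp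
  have lp : (up * ((b 0 - a 0)^2 + (b 1 - a 1)^2)) * (((b 0 - a 0)*(y 1 - a 1) - (b 1 - a 1)*(y 0 - a 0)) - ((b 0 - a 0)*(x 1 - a 1) - (b 1 - a 1)*(x 0 - a 0))) = ((b 0 - a 0)*(x 0 - a 0) + (b 1 - a 1)*(x 1 - a 1))*((b 0 - a 0)*(y 1 - a 1) - (b 1 - a 1)*(y 0 - a 0)) - ((b 0 - a 0)*(y 0 - a 0) + (b 1 - a 1)*(y 1 - a 1))*((b 0 - a 0)*(x 1 - a 1) - (b 1 - a 1)*(x 0 - a 0)) := by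
    linear_combination (-((b 0 - a 0)^2 + (b 1 - a 1)^2))*crp
  have crq := cross_of_mem_span hqyz
  rw [hq0, hq1] at crq
  have lq : (uq * ((b 0 - a 0)^2 + (b 1 - a 1)^2)) * (((b 0 - a 0)*(z 1 - a 1) - (b 1 - a 1)*(z 0 - a 0)) - ((b 0 - a 0)*(y 1 - a 1) - (b 1 - a 1)*(y 0 - a 0))) = ((b 0 - a 0)*(y 0 - a 0) + (b 1 - a 1)*(y 1 - a 1))*((b 0 - a 0)*(z 1 - a 1) - (b 1 - a 1)*(z 0 - a 0)) - ((b 0 - a 0)*(z 0 - a 0) + (b 1 - a 1)*(z 1 - a 1))*((b 0 - a 0)*(y 1 - a 1) - (b 1 - a 1)*(y 0 - a 0)) := by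
    linear_combination (-((b 0 - a 0)^2 + (b 1 - a 1)^2))*crq
  have crr := cross_of_mem_span hrzt
  rw [hr0, hr1] at crr
  have lr : (ur * ((b 0 - a 0)^2 + (b 1 - a 1)^2)) * (((b 0 - a 0)*(t 1 - a 1) - (b 1 - a 1)*(t 0 - a 0)) - ((b 0 - a 0)*(z 1 - a 1) - (b 1 - a 1)*(z 0 - a 0))) = ((b 0 - a 0)*(z 0 - a 0) + (b 1 - a 1)*(z 1 - a 1))*((b 0 - a 0)*(t 1 - a 1) - (b 1 - a 1)*(t 0 - a 0)) - ((b 0 - a 0)*(t 0 - a 0) + (b 1 - a 1)*(t 1 - a 1))*((b 0 - a 0)*(z 1 - a 1) - (b 1 - a 1)*(z 0 - a 0)) := by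
    linear_combination (-((b 0 - a 0)^2 + (b 1 - a 1)^2))*crr
  have crs := cross_of_mem_span hstx
  rw [hs0, hs1] at crs
  have ls : (us * ((b 0 - a 0)^2 + (b 1 - a 1)^2)) * (((b 0 - a 0)*(x 1 - a 1) - (b 1 - a 1)*(x 0 - a 0)) - ((b 0 - a 0)*(t 1 - a 1) - (b 1 - a 1)*(t 0 - a 0))) = ((b 0 - a 0)*(t 0 - a 0) + (b 1 - a 1)*(t 1 - a 1))*((b 0 - a 0)*(x 1 - a 1) - (b 1 - a 1)*(x 0 - a 0)) - ((b 0 - a 0)*(x 0 - a 0) + (b 1 - a 1)*(x 1 - a 1))*((b 0 - a 0)*(t 1 - a 1) - (b 1 - a 1)*(t 0 - a 0)) := by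
    linear_combination (-((b 0 - a 0)^2 + (b 1 - a 1)^2))*crs
  -- the hypothesis dist a q = dist b s gives uq + us = 1
  have hdq : dist a q = uq * dist a b := by
    rw [← hqu, dist_left_lineMap, Real.norm_eq_abs, abs_of_pos huq.1]
  have hds : dist b s = (1 - us) * dist a b := by
    rw [← hsu, dist_right_lineMap, Real.norm_eq_abs,
      abs_of_pos (by linarith [hus.2] : (0:ℝ) < 1 - us)]
  have hdab : dist a b ≠ 0 := dist_ne_zero.mpr hab
  have huqs : uq + us = 1 := by
    rw [hdq, hds] at hqs
    have := mul_right_cancel₀ hdab hqs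
    linarith
  have hQS : uq * ((b 0 - a 0)^2 + (b 1 - a 1)^2) + us * ((b 0 - a 0)^2 + (b 1 - a 1)^2) = ((b 0 - a 0)^2 + (b 1 - a 1)^2) := by
    linear_combination ((b 0 - a 0)^2 + (b 1 - a 1)^2) * huqs
  have hPR := core ((b 0 - a 0)^2 + (b 1 - a 1)^2) (2*((b 0 - a 0)*(o 1 - a 1) - (b 1 - a 1)*(o 0 - a 0))) ((b 0 - a 0)*(x 0 - a 0) + (b 1 - a 1)*(x 1 - a 1)) ((b 0 - a 0)*(x 1 - a 1) - (b 1 - a 1)*(x 0 - a 0)) ((b 0 - a 0)*(y 0 - a 0) + (b 1 - a 1)*(y 1 - a 1)) ((b 0 - a 0)*(y 1 - a 1) - (b 1 - a 1)*(y 0 - a 0)) ((b 0 - a 0)*(z 0 - a 0) + (b 1 - a 1)*(z 1 - a 1)) ((b 0 - a 0)*(z 1 - a 1) - (b 1 - a 1)*(z 0 - a 0))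
    ((b 0 - a 0)*(t 0 - a 0) + (b 1 - a 1)*(t 1 - a 1)) ((b 0 - a 0)*(t 1 - a 1) - (b 1 - a 1)*(t 0 - a 0)) (up * ((b 0 - a 0)^2 + (b 1 - a 1)^2)) (uq * ((b 0 - a 0)^2 + (b 1 - a 1)^2)) (ur * ((b 0 - a 0)^2 + (b 1 - a 1)^2)) (us * ((b 0 - a 0)^2 + (b 1 - a 1)^2))
    hex hey hez het hcxy hcyz hczt hctx cx cy cz ct lp lq lr ls hQS
  have hupr : up + ur = 1 := by
    have h5 : (up + ur - 1) * ((b 0 - a 0)^2 + (b 1 - a 1)^2) = 0 := by linear_combination hPR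
    have := (mul_eq_zero.mp h5).resolve_right hK
    linarith
  rw [← hpu, ← hqu, ← hru, ← hsu, dist_lineMap_lineMap, dist_lineMap_lineMap]
  have h6 : up - uq = us - ur := by linarith
  rw [Real.dist_eq, Real.dist_eq, h6, abs_sub_comm]
end
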